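/- arXiv:1510.01286 — 8 statements merged into one kernel-verified Lean document; each statement's English description precedes it below -/
import Mathlib

section
/- Let p ≥ 3 be an integer and set r₋ = p(2p−1), r₊ = p(2p+1). Then: (1) a natural number x with x ≤ (p−1)r₊ lies in S(r₋,r₊) if and only if x = a·r₋ + b·r₊ for some integers a,b ≥ 0 with a+b ≤ p−1, and this representation is unique; (2) for nonnegative integers a,b,c,d with a+b ≤ p−1 and c+d ≤ p−1, one has a·r₋ + b·r₊ < c·r₋ + d·r₊ if and only if either a+b < c+d, or a+b = c+d and b < d. In particular, as an ordered set, S(r₋,r₊) ∩ [0,(p−1)r₊] is {0; r₋, r₊; 2r₋, r₋+r₊, 2r₊; … ; (p−1)r₋, (p−2)r₋+r₊, …, (p−1)r₊}. -/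
/-!
Since `p(2p+1) = p(2p-1) + 2p`, we have `a·r₋ + b·r₊ = (a+b)·r₋ + 2p·b`, and for `b ≤ p-1` the
remainder `2p·b ≤ 2p(p-1)` is smaller than `r₋ = p(2p-1)`. So division by `r₋` reads off `a+b` as
quotient and `2p·b` as remainder, and the order on such numbers is the lexicographic order on
`(a+b, b)`. Membership follows from `(p-1)·r₊ = p·r₋ - p`: a combination of `r₋, r₊` with at
least `p` summands already exceeds `(p-1)·r₊`.
-/

theorem Nat.mul_add_lt_mul_add_iff_lex {r s t x y : ℕ} (hx : x < r) (hy : y < r) :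
    s * r + x < t * r + y ↔ s < t ∨ s = t ∧ x < y := by
  constructor
  · intro h
    rcases Nat.lt_trichotomy s t with hst | rfl | hts
    · exact .inl hst
    · exact .inr ⟨rfl, by omega⟩
    · have : (t + 1) * r ≤ s * r := Nat.mul_le_mul_right r hts
      nlinarith
  · rintro (hst | ⟨rfl, hxy⟩)
    · have : (s + 1) * r ≤ t * r := Nat.mul_le_mul_right r hst
      nlinarith
    · omega

namespace BrieskornSemigroup

variable {p : ℕ}

theorem mul_add_mul_eq_add_mul_add (a b : ℕ) :
    a * (p * (2 * p - 1)) + b * (p * (2 * p + 1)) =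
      (a + b) * (p * (2 * p - 1)) + b * (2 * p) := by
  rcases p with _ | p
  · simp
  · rw [show 2 * (p + 1) + 1 = (2 * (p + 1) - 1) + 2 by omega]
    ring

theorem mul_two_mul_lt {b : ℕ} (hb : b < p) : b * (2 * p) < p * (2 * p - 1) := by
  obtain ⟨m, rfl⟩ : ∃ m, p = b + 1 + m := ⟨p - (b + 1), by omega⟩
  rw [show 2 * (b + 1 + m) - 1 = 2 * b + 2 * m + 1 by omega]
  nlinarith

theorem sub_one_mul_lt_mul (hp : 0 < p) :
    (p - 1) * (p * (2 * p + 1)) < p * (p * (2 * p - 1)) := by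
  obtain ⟨m, rfl⟩ : ∃ m, p = m + 1 := ⟨p - 1, by omega⟩
  rw [show 2 * (m + 1) - 1 = 2 * m + 1 by omega, Nat.add_sub_cancel]
  nlinarith

theorem add_lt_of_mul_add_mul_le (hp : 0 < p) {a b : ℕ}
    (h : a * (p * (2 * p - 1)) + b * (p * (2 * p + 1)) ≤ (p - 1) * (p * (2 * p + 1))) :
    a + b < p := by
  rw [mul_add_mul_eq_add_mul_add] at h
  exact Nat.lt_of_mul_lt_mul_right ((Nat.le_of_add_right_le h).trans_lt (sub_one_mul_lt_mul hp))

theorem mul_add_mul_lt_iff {a b c d : ℕ} (hb : b < p) (hd : d < p) :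
    a * (p * (2 * p - 1)) + b * (p * (2 * p + 1)) <
        c * (p * (2 * p - 1)) + d * (p * (2 * p + 1)) ↔
      a + b < c + d ∨ (a + b = c + d ∧ b < d) := by
  rw [mul_add_mul_eq_add_mul_add, mul_add_mul_eq_add_mul_add,
    Nat.mul_add_lt_mul_add_iff_lex (mul_two_mul_lt hb) (mul_two_mul_lt hd),
    Nat.mul_lt_mul_right (by omega)]

theorem eq_and_eq_of_mul_add_mul_eq {a b c d : ℕ} (hb : b < p) (hd : d < p)
    (h : a * (p * (2 * p - 1)) + b * (p * (2 * p + 1)) =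
      c * (p * (2 * p - 1)) + d * (p * (2 * p + 1))) :
    a = c ∧ b = d := by
  have hlt := (mul_add_mul_lt_iff hb hd).not.mp h.not_lt
  have hgt := (mul_add_mul_lt_iff hd hb).not.mp h.not_gt
  omega

end BrieskornSemigroup

/-- structure of the semigroup `S(r₋, r₊)` with `r₋ = p(2p-1)`, `r₊ = p(2p+1)`
in the range `[0, (p-1)r₊]`: membership characterization, uniqueness of the representation,
and the ordering of the elements `a·r₋ + b·r₊`. -/
theorem stmt_1 (p : ℕ) (hp : 3 ≤ p) :
    (∀ x : ℕ, x ≤ (p - 1) * (p * (2 * p + 1)) →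
      (x ∈ AddSubmonoid.closure ({p * (2 * p - 1), p * (2 * p + 1)} : Set ℕ) ↔
        ∃ a b : ℕ, a + b ≤ p - 1 ∧ x = a * (p * (2 * p - 1)) + b * (p * (2 * p + 1)))) ∧
    (∀ a b c d : ℕ, a + b ≤ p - 1 → c + d ≤ p - 1 →
      a * (p * (2 * p - 1)) + b * (p * (2 * p + 1)) =
        c * (p * (2 * p - 1)) + d * (p * (2 * p + 1)) →
      a = c ∧ b = d) ∧
    (∀ a b c d : ℕ, a + b ≤ p - 1 → c + d ≤ p - 1 →
      (a * (p * (2 * p - 1)) + b * (p * (2 * p + 1)) <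
          c * (p * (2 * p - 1)) + d * (p * (2 * p + 1)) ↔
        a + b < c + d ∨ (a + b = c + d ∧ b < d))) := by
  have hp0 : 0 < p := by omega
  refine ⟨fun x hx => ?_, fun a b c d hab hcd h => ?_, fun a b c d hab hcd => ?_⟩
  · simp only [AddSubmonoid.mem_closure_pair, smul_eq_mul]
    constructor
    · rintro ⟨a, b, rfl⟩
      exact ⟨a, b, by have := BrieskornSemigroup.add_lt_of_mul_add_mul_le hp0 hx; omega, rfl⟩
    · rintro ⟨a, b, -, rfl⟩
      exact ⟨a, b, rfl⟩
  · exact BrieskornSemigroup.eq_and_eq_of_mul_add_mul_eq (by omega) (by omega) h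
  · exact BrieskornSemigroup.mul_add_mul_lt_iff (by omega) (by omega)
end

section
/- Let p ≥ 3 be an integer, r₋ = p(2p−1), r₊ = p(2p+1), w = (2p−1)(2p+1), N_p = p(2p−1)(2p+1) − p(2p−1) − p(2p+1) − (2p−1)(2p+1), and S_{Y_p} = S(r₋,r₊,w) ∩ [0,N_p]. If a,b ≥ 0 are integers and x := a·r₋ + b·r₊ satisfies x ≤ 2r₋ + (p−3)r₊, then (as integers) x < N_p − (p−a−1)r₋ − (p−b−3)r₊, and moreover N_p − (p−a−1)r₋ − (p−b−3)r₊ < y for every y ∈ S_{Y_p} with y > x (i.e., the integer N_p − (p−a−1)r₋ − (p−b−3)r₊ lies strictly between x and the positive successor of x in S_{Y_p}). -/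
/-!
Write `r₋ = p(2p-1)`, `r₊ = p(2p+1)` and `w = (2p-1)(2p+1) = 4p² - 1`. The integer in question is
`x + (p + 1)`, so it suffices that no `y ∈ S_{Y_p}` has `0 < y - x ≤ p + 1`. Write
`y = c r₋ + d r₊ + e w`, so that `y - x = u r₋ + v r₊ + e w` with `u = c - a`, `v = d - b`. The
bound on `x` gives `u ≥ 1 - p` and `v ≥ 2 - p`, and `y ≤ N_p` gives `0 ≤ e ≤ p - 3`. As
`w ≡ -1 (mod p)`, `p` divides `(y - x) + e ∈ (0, 2p)`, so `(y - x) + e = p`, which after dividing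
by `p` reads `2p(u + v + 2e) + (v - u) = 1`. The lower bounds on `u` and `v` force
`u + v + 2e = 0`, so `v - u = 1` while `u + v = -2e` is even.
-/

namespace AddSubmonoid

theorem mem_closure_triple {A : Type*} [AddCommMonoid A] {a b c x : A} :
    x ∈ closure ({a, b, c} : Set A) ↔ ∃ l m n : ℕ, l • a + m • b + n • c = x := by
  rw [← Set.singleton_union, closure_union, mem_sup]
  simp_rw [mem_closure_singleton, mem_closure_pair, exists_exists_eq_and]
  constructor
  · rintro ⟨l, _, ⟨m, n, rfl⟩, rfl⟩
    exact ⟨l, m, n, add_assoc _ _ _⟩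
  · rintro ⟨l, m, n, rfl⟩
    exact ⟨l, _, ⟨m, n, rfl⟩, (add_assoc _ _ _).symm⟩

end AddSubmonoid

namespace BrieskornSemigroup

variable {p : ℤ}

lemma coeff_minus_le_of_le (hp : 0 < p) {a b : ℤ} (hb : 0 ≤ b)
    (hx : a * (p * (2*p - 1)) + b * (p * (2*p + 1)) ≤
        2 * (p * (2*p - 1)) + (p - 3) * (p * (2*p + 1))) :
    a ≤ p - 1 := by
  have hr : 0 < p * (2*p - 1) := by nlinarith
  have : a * (p * (2*p - 1)) < p * (p * (2*p - 1)) := by nlinarith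
  linarith [lt_of_mul_lt_mul_right this hr.le]

lemma coeff_plus_le_of_le (hp : 0 < p) {a b : ℤ} (ha : 0 ≤ a)
    (hx : a * (p * (2*p - 1)) + b * (p * (2*p + 1)) ≤
        2 * (p * (2*p - 1)) + (p - 3) * (p * (2*p + 1))) :
    b ≤ p - 2 := by
  have hr : 0 < p * (2*p + 1) := by nlinarith
  have : b * (p * (2*p + 1)) < (p - 1) * (p * (2*p + 1)) := by
    nlinarith [mul_nonneg ha (by nlinarith : (0:ℤ) ≤ p * (2*p - 1))]
  linarith [lt_of_mul_lt_mul_right this hr.le]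

lemma coeff_w_le_of_le (hp : 0 < p) {c d e : ℤ} (hc : 0 ≤ c) (hd : 0 ≤ d)
    (hy : c * (p * (2*p - 1)) + d * (p * (2*p + 1)) + e * ((2*p - 1) * (2*p + 1)) ≤
      p * (2*p - 1) * (2*p + 1) - p * (2*p - 1) - p * (2*p + 1) - (2*p - 1) * (2*p + 1)) :
    e ≤ p - 3 := by
  have hw : 0 < (2*p - 1) * (2*p + 1) := by nlinarith
  have : e * ((2*p - 1) * (2*p + 1)) < (p - 2) * ((2*p - 1) * (2*p + 1)) := by
    nlinarith [mul_nonneg hc (by nlinarith : (0:ℤ) ≤ p * (2*p - 1)),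
      mul_nonneg hd (by nlinarith : (0:ℤ) ≤ p * (2*p + 1))]
  linarith [lt_of_mul_lt_mul_right this hw.le]

lemma add_one_lt_of_pos (hp : 0 < p) {u v e : ℤ} (hu : 1 - p ≤ u) (hv : 2 - p ≤ v)
    (he₀ : 0 ≤ e) (he : e ≤ p - 3)
    (hs : 0 < u * (p * (2*p - 1)) + v * (p * (2*p + 1)) + e * ((2*p - 1) * (2*p + 1))) :
    p + 1 < u * (p * (2*p - 1)) + v * (p * (2*p + 1)) + e * ((2*p - 1) * (2*p + 1)) := by
  by_contra! hle
  set K := u * (2*p - 1) + v * (2*p + 1) + 4 * p * e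
  have hK : u * (p * (2*p - 1)) + v * (p * (2*p + 1)) + e * ((2*p - 1) * (2*p + 1)) + e
      = p * K := by ring
  have hK₁ : K = 1 := by
    have h₀ : 0 < K := pos_of_mul_pos_right (hK ▸ by linarith) hp.le
    have h₂ : K < 2 := lt_of_mul_lt_mul_left (hK ▸ by linarith) hp.le
    omega
  set m := u + v + 2 * e
  have hm_lt : m < 1 := by
    have : (2*p - 1) * m = 1 - 2 * v - 2 * e := by linear_combination hK₁
    exact lt_of_mul_lt_mul_left (by linarith) (by linarith : (0:ℤ) ≤ 2*p - 1)
  have hm_gt : -1 < m := by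
    have : (2*p + 1) * m = 1 + 2 * u + 2 * e := by linear_combination hK₁
    exact lt_of_mul_lt_mul_left (by linarith) (by linarith : (0:ℤ) ≤ 2*p + 1)
  have hm : m = 0 := by omega
  have : v - u = 1 := by linear_combination hK₁ - 2 * p * hm
  omega

end BrieskornSemigroup

/-- for `p ≥ 3`, `r₋ = p(2p-1)`, `r₊ = p(2p+1)`, `w = (2p-1)(2p+1)`,
`N_p = p(2p-1)(2p+1) - p(2p-1) - p(2p+1) - (2p-1)(2p+1)`, and `x = a·r₋ + b·r₊ ≤ 2r₋ + (p-3)r₊`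
with `a, b ≥ 0`, the integer `N_p - (p-a-1)r₋ - (p-b-3)r₊` lies strictly between `x` and
every element of `S_{Y_p} = S(r₋,r₊,w) ∩ [0,N_p]` strictly greater than `x`. -/
theorem stmt_2 (p : ℤ) (hp : 3 ≤ p) (a b : ℤ) (ha : 0 ≤ a) (hb : 0 ≤ b)
    (hx : a * (p * (2*p - 1)) + b * (p * (2*p + 1)) ≤
        2 * (p * (2*p - 1)) + (p - 3) * (p * (2*p + 1))) :
    a * (p * (2*p - 1)) + b * (p * (2*p + 1)) <
      (p * (2*p - 1) * (2*p + 1) - p * (2*p - 1) - p * (2*p + 1) - (2*p - 1) * (2*p + 1))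
        - (p - a - 1) * (p * (2*p - 1)) - (p - b - 3) * (p * (2*p + 1)) ∧
    ∀ y : ℤ,
      y ∈ AddSubmonoid.closure
          ({p * (2*p - 1), p * (2*p + 1), (2*p - 1) * (2*p + 1)} : Set ℤ) →
      y ≤ p * (2*p - 1) * (2*p + 1) - p * (2*p - 1) - p * (2*p + 1) - (2*p - 1) * (2*p + 1) →
      a * (p * (2*p - 1)) + b * (p * (2*p + 1)) < y →
      (p * (2*p - 1) * (2*p + 1) - p * (2*p - 1) - p * (2*p + 1) - (2*p - 1) * (2*p + 1))
        - (p - a - 1) * (p * (2*p - 1)) - (p - b - 3) * (p * (2*p + 1)) < y := by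
  have hp₀ : 0 < p := by linarith
  have hgap : (p * (2*p - 1) * (2*p + 1) - p * (2*p - 1) - p * (2*p + 1) - (2*p - 1) * (2*p + 1))
        - (p - a - 1) * (p * (2*p - 1)) - (p - b - 3) * (p * (2*p + 1))
      = a * (p * (2*p - 1)) + b * (p * (2*p + 1)) + (p + 1) := by ring
  rw [hgap]
  refine ⟨by linarith, fun y hy hyN hxy => ?_⟩
  obtain ⟨c, d, e, rfl⟩ := AddSubmonoid.mem_closure_triple.mp hy
  simp only [nsmul_eq_mul] at hyN hxy ⊢
  have hsucc := BrieskornSemigroup.add_one_lt_of_pos hp₀ (u := c - a) (v := d - b)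
    (by linarith [BrieskornSemigroup.coeff_minus_le_of_le hp₀ hb hx])
    (by linarith [BrieskornSemigroup.coeff_plus_le_of_le hp₀ ha hx])
    (by positivity) (BrieskornSemigroup.coeff_w_le_of_le hp₀ (by positivity) (by positivity) hyN)
    (by linear_combination hxy)
  linear_combination hsucc
end

section
/- Let p ≥ 3 be an integer, with r₋ = p(2p−1), r₊ = p(2p+1), w = (2p−1)(2p+1), N_p = 4p³ − 8p² − p + 1, and let (X̃_{Y_p}, Δ̃_{Y_p}) be the reduced form of the abstract delta sequence (X_{Y_p}, Δ_{Y_p}) of Σ(p,2p−1,2p+1). Write S̃ for the set of elements of X̃_{Y_p} on which Δ̃_{Y_p} is positive. Then: (i) S̃ ∩ [0, 2r₋+(p−3)r₊] = (S(r₋,r₊) ∩ [0, 2r₋+(p−3)r₊]) ∖ {(p−2)r₊}; (ii) if x = a·r₋ + b·r₊ with a,b ≥ 0 lies in S̃ ∩ [0, 2r₋+(p−3)r₊] and x ∉ {(p−2)r₊, (p−1)r₋}, then Δ̃_{Y_p}(x) = min{a,b} + 1, while Δ̃_{Y_p}((p−1)r₋) = 2. -/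
/-! Abstract delta sequences, their reduced forms, and the sinking condition,
following Stoffregen (after Hom–Karakurt–Lidman and Can–Karakurt). An abstract delta
sequence is a function `Δ : α → ℤ` (nonzero on a finite linearly ordered set `X`,
positive at the minimum of `X`).

`dsRun X Δ x` is the (maximal) run of `x` in `X`: all `y ∈ X` such that every element of
`X` lying (inclusively) between `x` and `y` has the same sign of `Δ` as `x`.

`redSet X Δ` is the underlying set of the reduced form of `(X, Δ)`: for each maximal run
of constant sign it keeps the largest element if the sign is positive and the smallest
element if the sign is negative.

`redDelta X Δ x` is the value of the reduced delta sequence at `x`: the sum of `Δ` over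
the run of `x`. -/

open Classical in
noncomputable def dsRun {α : Type*} [LinearOrder α] (X : Finset α) (Δ : α → ℤ) (x : α) :
    Finset α :=
  X.filter (fun y => ∀ z ∈ X, min x y ≤ z → z ≤ max x y → (0 < Δ z ↔ 0 < Δ x))

open Classical in
noncomputable def redSet {α : Type*} [LinearOrder α] (X : Finset α) (Δ : α → ℤ) : Finset α :=
  X.filter (fun x =>
    (0 < Δ x ∧ ∀ y ∈ dsRun X Δ x, y ≤ x) ∨ (Δ x < 0 ∧ ∀ y ∈ dsRun X Δ x, x ≤ y))

noncomputable def redDelta {α : Type*} [LinearOrder α] (X : Finset α) (Δ : α → ℤ) (x : α) :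
    ℤ :=
  ∑ y ∈ dsRun X Δ x, Δ y

/-- A delta sequence `(X, Δ)` is sinking if: (i) `Δ` is negative at the maximum of `X`;
(ii) each positive value of the reduced sequence is at most the absolute value of the next
negative value of the reduced sequence; (iii) the last positive value of the reduced
sequence is strictly less than the absolute value of its final value. -/
def IsSinking {α : Type*} [LinearOrder α] (X : Finset α) (Δ : α → ℤ) : Prop :=
  (∀ m ∈ X, (∀ x ∈ X, x ≤ m) → Δ m < 0) ∧
  (∀ x ∈ redSet X Δ, 0 < redDelta X Δ x →
    ∀ y ∈ redSet X Δ, x < y → redDelta X Δ y < 0 →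
      (∀ z ∈ redSet X Δ, x < z → redDelta X Δ z < 0 → y ≤ z) →
      redDelta X Δ x ≤ -redDelta X Δ y) ∧
  (∀ x ∈ redSet X Δ, 0 < redDelta X Δ x →
    (∀ z ∈ redSet X Δ, 0 < redDelta X Δ z → z ≤ x) →
    ∀ m ∈ redSet X Δ, (∀ z ∈ redSet X Δ, z ≤ m) →
      redDelta X Δ x < -redDelta X Δ m)

/-! The abstract delta sequence of the Brieskorn sphere `Y_p = Σ(p, 2p-1, 2p+1)`:
`r₋ = p(2p-1)`, `r₊ = p(2p+1)`, `w = (2p-1)(2p+1)`, `N_p = 4p³ - 8p² - p + 1`,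
`S_{Y_p} = S(r₋, r₊, w) ∩ [0, N_p]`, `Q_{Y_p} = {N_p - s : s ∈ S_{Y_p}}`,
`X_{Y_p} = S_{Y_p} ∪ Q_{Y_p}` and `Δ_{Y_p} = +1` on `S_{Y_p}`, `-1` on `Q_{Y_p}`. -/

def rMinus (p : ℕ) : ℕ := p * (2*p - 1)

def rPlus (p : ℕ) : ℕ := p * (2*p + 1)

def wP (p : ℕ) : ℕ := (2*p - 1) * (2*p + 1)

def NP (p : ℕ) : ℕ := 4*p^3 - 8*p^2 - p + 1

open Classical in
noncomputable def SYp (p : ℕ) : Finset ℕ :=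
  (Finset.range (NP p + 1)).filter
    (fun x => x ∈ AddSubmonoid.closure ({rMinus p, rPlus p, wP p} : Set ℕ))

noncomputable def QYp (p : ℕ) : Finset ℕ := (SYp p).image (fun s => NP p - s)

noncomputable def XYp (p : ℕ) : Finset ℕ := SYp p ∪ QYp p

noncomputable def ΔYp (p : ℕ) : ℕ → ℤ := fun x => if x ∈ SYp p then 1 else -1

/-! Write `p = q + 3`, so that no truncated subtraction appears. Since `w = r₋ + r₊ - 1`, the
elements of `S(r₋, r₊, w)` are the numbers `a r₋ + b r₊ - c` with `c ≤ min a b`; such a number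
lies in `[(a + b) r₋, (a + b) r₊]`. In the range of the theorem the lattice points
`a r₋ + b r₊ = p ((2p - 1)(a + b) + 2b)` are at least `2p` apart, so each of them, `v`, tops a
block `[v - min a b, v] ⊆ S`, and the gaps on either side contain no element of `S` but do
contain the elements `v + p + 1` and `v - (p - 1)` of `Q = N - S`. Hence the run of `v` is exactly
this block, of value `min a b + 1`. The one exception is the pair `(p - 2) r₊ < (p - 1) r₋`, only
`3p` apart with no element of `X` in between, which merge into a single run of value `2`. -/

section DeltaSequence

variable {α : Type*} [LinearOrder α] {X : Finset α} {Δ : α → ℤ} {x y : α}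

theorem mem_dsRun : y ∈ dsRun X Δ x ↔
    y ∈ X ∧ ∀ z ∈ X, min x y ≤ z → z ≤ max x y → (0 < Δ z ↔ 0 < Δ x) := by
  simp [dsRun]

theorem mem_dsRun_symm (hy : y ∈ dsRun X Δ x) (hx : x ∈ X) : x ∈ dsRun X Δ y := by
  rw [mem_dsRun] at hy ⊢
  have hyx := hy.2 y hy.1 (min_le_right _ _) (le_max_right _ _)
  refine ⟨hx, fun z hz h1 h2 => ?_⟩
  rw [hy.2 z hz (by rwa [min_comm]) (by rwa [max_comm]), hyx]

theorem ge_of_mem_dsRun {t lo : α} (ht : t ∈ X) (htlo : t < lo) (hlox : lo ≤ x)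
    (hgap : ∀ z ∈ X, t ≤ z → z < lo → ¬(0 < Δ z ↔ 0 < Δ x)) (hy : y ∈ dsRun X Δ x) :
    lo ≤ y := by
  by_contra! hyl
  rw [mem_dsRun] at hy
  have hu : max t y ∈ X := by rcases max_choice t y with h | h <;> rw [h] <;> tauto
  exact hgap _ hu (le_max_left _ _) (max_lt htlo hyl)
    (hy.2 _ hu ((min_le_right _ _).trans (le_max_right _ _))
      ((max_lt htlo hyl).le.trans (hlox.trans (le_max_left _ _))))

theorem le_of_mem_dsRun {t hi : α} (ht : t ∈ X) (hhit : hi < t) (hxhi : x ≤ hi)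
    (hgap : ∀ z ∈ X, hi < z → z ≤ t → ¬(0 < Δ z ↔ 0 < Δ x)) (hy : y ∈ dsRun X Δ x) :
    y ≤ hi := by
  by_contra! hyh
  rw [mem_dsRun] at hy
  have hu : min t y ∈ X := by rcases min_choice t y with h | h <;> rw [h] <;> tauto
  exact hgap _ hu (lt_min hhit hyh) (min_le_left _ _)
    (hy.2 _ hu ((min_le_left _ _).trans (hxhi.trans (lt_min hhit hyh).le))
      ((min_le_right _ _).trans (le_max_right _ _)))

theorem dsRun_eq_filter {lo hi : α} (hlo : lo ≤ x) (hhi : x ≤ hi)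
    (hsame : ∀ z ∈ X, lo ≤ z → z ≤ hi → (0 < Δ z ↔ 0 < Δ x))
    (hge : ∀ y ∈ dsRun X Δ x, lo ≤ y) (hle : ∀ y ∈ dsRun X Δ x, y ≤ hi) :
    dsRun X Δ x = X.filter (fun y => lo ≤ y ∧ y ≤ hi) := by
  ext y
  rw [Finset.mem_filter]
  refine ⟨fun hy => ⟨(mem_dsRun.1 hy).1, hge y hy, hle y hy⟩, fun ⟨hyX, hly, hyh⟩ => ?_⟩
  refine mem_dsRun.2 ⟨hyX, fun z hz h1 h2 => hsame z hz ?_ ?_⟩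
  · exact (le_min hlo hly).trans h1
  · exact h2.trans (max_le hhi hyh)

theorem mem_redSet_iff_of_pos (h : 0 < Δ x) :
    x ∈ redSet X Δ ↔ x ∈ X ∧ ∀ y ∈ dsRun X Δ x, y ≤ x := by
  simp [redSet, h, h.not_gt]

theorem pos_of_redDelta_pos (h : 0 < redDelta X Δ x) : 0 < Δ x := by
  by_contra! hx
  refine h.not_ge (Finset.sum_nonpos fun y hy => ?_)
  have hy := mem_dsRun.1 hy
  exact not_lt.1 fun hpos =>
    hx.not_gt ((hy.2 y hy.1 (min_le_right _ _) (le_max_right _ _)).1 hpos)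

end DeltaSequence

theorem AddSubmonoid.mem_closure_triple_s4 {A : Type*} [AddCommMonoid A] (a b c x : A) :
    x ∈ closure ({a, b, c} : Set A) ↔ ∃ l m n : ℕ, l • a + m • b + n • c = x := by
  rw [← Set.singleton_union, closure_union, mem_sup]
  simp_rw [mem_closure_singleton, mem_closure_pair]
  constructor
  · rintro ⟨_, ⟨l, rfl⟩, _, ⟨m, n, rfl⟩, rfl⟩
    exact ⟨l, m, n, add_assoc _ _ _⟩
  · rintro ⟨l, m, n, rfl⟩
    exact ⟨_, ⟨l, rfl⟩, _, ⟨m, n, rfl⟩, (add_assoc _ _ _).symm⟩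

theorem mem_closure_iff_add_eq {r s w x : ℕ} (hw : w + 1 = r + s) :
    x ∈ AddSubmonoid.closure ({r, s, w} : Set ℕ) ↔
      ∃ a b c : ℕ, c ≤ a ∧ c ≤ b ∧ x + c = a * r + b * s := by
  rw [AddSubmonoid.mem_closure_triple_s4]
  constructor
  · rintro ⟨l, m, n, rfl⟩
    refine ⟨l + n, m + n, n, by omega, by omega, ?_⟩
    simp only [smul_eq_mul]
    linear_combination n * hw
  · rintro ⟨a, b, c, hca, hcb, h⟩
    obtain ⟨a, rfl⟩ := Nat.exists_eq_add_of_le hca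
    obtain ⟨b, rfl⟩ := Nat.exists_eq_add_of_le hcb
    refine ⟨a, b, c, ?_⟩
    simp only [smul_eq_mul]
    have hcw : c * w + c = c * r + c * s := by rw [← mul_add_one, hw, mul_add]
    linarith

theorem mul_le_and_le_mul_of_add_eq {r s a b c x : ℕ} (hrs : r < s) (hcb : c ≤ b)
    (h : x + c = a * r + b * s) : (a + b) * r ≤ x ∧ x ≤ (a + b) * s := by
  have := Nat.mul_le_mul_left b hrs
  constructor <;> nlinarith

theorem le_or_le_of_mem_closure {r s w x : ℕ} (hw : w + 1 = r + s) (hrs : r < s)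
    (hx : x ∈ AddSubmonoid.closure ({r, s, w} : Set ℕ)) (k : ℕ) :
    x ≤ k * s ∨ (k + 1) * r ≤ x := by
  obtain ⟨a, b, c, -, hcb, h⟩ := (mem_closure_iff_add_eq hw).1 hx
  obtain ⟨hlo, hhi⟩ := mul_le_and_le_mul_of_add_eq hrs hcb h
  rcases le_or_gt (a + b) k with hk | hk
  · exact .inl (hhi.trans (Nat.mul_le_mul_right s hk))
  · exact .inr ((Nat.mul_le_mul_right r hk).trans hlo)

theorem Nat.eq_and_eq_of_mul_add_eq_mul_add {m t₁ t₂ r₁ r₂ : ℕ} (h₁ : r₁ < m) (h₂ : r₂ < m)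
    (h : m * t₁ + r₁ = m * t₂ + r₂) : t₁ = t₂ ∧ r₁ = r₂ := by
  have hm : 0 < m := by omega
  have e₁ := (Nat.div_mod_unique hm).2 ⟨add_comm r₁ (m * t₁), h₁⟩
  have e₂ := (Nat.div_mod_unique hm).2 ⟨add_comm r₂ (m * t₂), h₂⟩
  rw [h] at e₁
  exact ⟨e₁.1.symm.trans e₂.1, e₁.2.symm.trans e₂.2⟩

section BrieskornSphere

variable {q a b x : ℕ}

theorem rMinus_eq (q : ℕ) : rMinus (q + 3) = (q + 3) * (2 * q + 5) := by
  rw [rMinus, show 2 * (q + 3) - 1 = 2 * q + 5 by omega]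

theorem rPlus_eq (q : ℕ) : rPlus (q + 3) = (q + 3) * (2 * q + 7) := by
  rw [rPlus]; ring

theorem rMinus_pos (q : ℕ) : 0 < rMinus (q + 3) := by
  rw [rMinus_eq]; positivity

theorem rMinus_lt_rPlus (q : ℕ) : rMinus (q + 3) < rPlus (q + 3) := by
  rw [rMinus_eq, rPlus_eq]; nlinarith

theorem wP_add_one (q : ℕ) : wP (q + 3) + 1 = rMinus (q + 3) + rPlus (q + 3) := by
  rw [wP, rMinus_eq, rPlus_eq, show 2 * (q + 3) - 1 = 2 * q + 5 by omega]; ring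

theorem NP_eq (q : ℕ) : NP (q + 3) = (q + 2) * rMinus (q + 3) + q * rPlus (q + 3) + (q + 4) := by
  have h : 4 * (q + 3) ^ 3 = ((q + 2) * ((q + 3) * (2 * q + 5)) + q * ((q + 3) * (2 * q + 7)) +
      (q + 3)) + (8 * (q + 3) ^ 2 + (q + 3)) := by ring
  rw [NP, rMinus_eq, rPlus_eq, Nat.sub_sub, Nat.sub_eq_of_eq_add h]
  ring

theorem NP_add (q : ℕ) :
    NP (q + 3) + (q + 2) = (q + 1) * rMinus (q + 3) + (q + 1) * rPlus (q + 3) := by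
  rw [NP_eq, rMinus_eq, rPlus_eq]; ring

theorem bound_lt_NP (q : ℕ) : 2 * rMinus (q + 3) + q * rPlus (q + 3) < NP (q + 3) := by
  have := Nat.mul_le_mul_right (rMinus (q + 3)) (show 2 ≤ q + 2 by omega)
  rw [NP_eq]; omega

theorem bound_add_eq (q : ℕ) :
    2 * rMinus (q + 3) + q * rPlus (q + 3) + 4 * (q + 3) = (q + 2) * rPlus (q + 3) := by
  rw [rMinus_eq, rPlus_eq]; ring

/-- Lattice points `a r₋ + b r₊` are multiples of `p = q + 3` whose index `(2p-1)(a+b) + 2b`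
recovers `a + b` and `b` as quotient and (even) remainder mod `2p-1`, as long as `2b < 2p-1`. -/
theorem lattice_eq (q a b : ℕ) :
    a * rMinus (q + 3) + b * rPlus (q + 3) = (q + 3) * ((2 * q + 5) * (a + b) + 2 * b) := by
  rw [rMinus_eq, rPlus_eq]; ring

theorem add_mul_rMinus_le_lattice (a b : ℕ) :
    (a + b) * rMinus (q + 3) ≤ a * rMinus (q + 3) + b * rPlus (q + 3) :=
  (mul_le_and_le_mul_of_add_eq (rMinus_lt_rPlus q) (Nat.zero_le b) (add_zero _)).1

theorem lattice_add_le_of_lt {a₁ b₁ a₂ b₂ : ℕ} (hb₁ : b₁ ≤ q + 1) (hb₂ : b₂ ≤ q + 1)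
    (h : a₁ * rMinus (q + 3) + b₁ * rPlus (q + 3) < a₂ * rMinus (q + 3) + b₂ * rPlus (q + 3)) :
    a₁ * rMinus (q + 3) + b₁ * rPlus (q + 3) + 2 * (q + 3) ≤
      a₂ * rMinus (q + 3) + b₂ * rPlus (q + 3) := by
  rw [lattice_eq, lattice_eq] at *
  have hlt := Nat.lt_of_mul_lt_mul_left h
  have hne : (2 * q + 5) * (a₁ + b₁) + (2 * b₁ + 1) ≠ (2 * q + 5) * (a₂ + b₂) + 2 * b₂ :=
    fun he => absurd (Nat.eq_and_eq_of_mul_add_eq_mul_add (by omega) (by omega) he).2 (by omega)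
  have := Nat.mul_le_mul_left (q + 3) (show
    (2 * q + 5) * (a₁ + b₁) + 2 * b₁ + 2 ≤ (2 * q + 5) * (a₂ + b₂) + 2 * b₂ by omega)
  linarith

theorem lattice_inj {a₁ b₁ a₂ b₂ : ℕ} (hb₁ : b₁ ≤ q + 1) (hb₂ : b₂ ≤ q + 1)
    (h : a₁ * rMinus (q + 3) + b₁ * rPlus (q + 3) = a₂ * rMinus (q + 3) + b₂ * rPlus (q + 3)) :
    a₁ = a₂ ∧ b₁ = b₂ := by
  rw [lattice_eq, lattice_eq] at h
  have := Nat.eq_and_eq_of_mul_add_eq_mul_add (by omega) (by omega)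
    (Nat.eq_of_mul_eq_mul_left (by omega) h)
  omega

theorem lattice_cases
    (h : a * rMinus (q + 3) + b * rPlus (q + 3) ≤ 2 * rMinus (q + 3) + q * rPlus (q + 3)) :
    (a ≤ q + 1 ∧ b ≤ q ∧ a + b ≤ q + 2) ∨ (a = q + 2 ∧ b = 0) ∨ (a = 0 ∧ b = q + 1) := by
  rw [lattice_eq, show 2 * rMinus (q + 3) + q * rPlus (q + 3) =
    (q + 3) * ((2 * q + 5) * (q + 2) + 2 * q) by rw [lattice_eq]; ring] at h
  have h' := Nat.le_of_mul_le_mul_left h (by omega)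
  have hab : a + b ≤ q + 2 := by
    by_contra! hc
    nlinarith
  by_cases hT : a + b = q + 2
  · rw [hT] at h'
    omega
  · omega

theorem lattice_le_bound (hab : a + b ≤ q + 2) (hb : b ≤ q) :
    a * rMinus (q + 3) + b * rPlus (q + 3) ≤ 2 * rMinus (q + 3) + q * rPlus (q + 3) := by
  rw [lattice_eq, show 2 * rMinus (q + 3) + q * rPlus (q + 3) =
    (q + 3) * ((2 * q + 5) * (q + 2) + 2 * q) by rw [lattice_eq]; ring]
  exact Nat.mul_le_mul_left _ (by nlinarith)

theorem mem_SYp {p x : ℕ} : x ∈ SYp p ↔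
    x ≤ NP p ∧ x ∈ AddSubmonoid.closure ({rMinus p, rPlus p, wP p} : Set ℕ) := by
  simp [SYp]

theorem mem_SYp_iff : x ∈ SYp (q + 3) ↔ x ≤ NP (q + 3) ∧
    ∃ a b c : ℕ, c ≤ a ∧ c ≤ b ∧ x + c = a * rMinus (q + 3) + b * rPlus (q + 3) := by
  rw [mem_SYp, mem_closure_iff_add_eq (wP_add_one q)]

theorem lattice_mem_SYp (h : a * rMinus (q + 3) + b * rPlus (q + 3) ≤ NP (q + 3)) :
    a * rMinus (q + 3) + b * rPlus (q + 3) ∈ SYp (q + 3) :=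
  mem_SYp_iff.2 ⟨h, a, b, 0, Nat.zero_le a, Nat.zero_le b, rfl⟩

theorem SYp_le_or_le (hx : x ∈ SYp (q + 3)) (k : ℕ) :
    x ≤ k * rPlus (q + 3) ∨ (k + 1) * rMinus (q + 3) ≤ x :=
  le_or_le_of_mem_closure (wP_add_one q) (rMinus_lt_rPlus q) (mem_SYp.1 hx).2 k

theorem SYp_subset_XYp {p : ℕ} : SYp p ⊆ XYp p := Finset.subset_union_left

theorem ΔYp_pos_iff {p x : ℕ} : 0 < ΔYp p x ↔ x ∈ SYp p := by
  unfold ΔYp; split_ifs with h <;> simp [h]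

theorem ΔYp_of_mem {p x : ℕ} (h : x ∈ SYp p) : ΔYp p x = 1 := if_pos h

theorem mem_QYp_of_add_eq {p s t : ℕ} (hs : s ∈ SYp p) (h : t + s = NP p) : t ∈ QYp p :=
  Finset.mem_image.2 ⟨s, hs, by omega⟩

theorem exists_add_eq_of_mem_QYp {p t : ℕ} (ht : t ∈ QYp p) : ∃ s ∈ SYp p, t + s = NP p := by
  obtain ⟨s, hs, rfl⟩ := Finset.mem_image.1 ht
  have := (mem_SYp.1 hs).1
  exact ⟨s, hs, by omega⟩

theorem exists_lattice_of_mem_SYp (hx : x ∈ SYp (q + 3)) (hlt : x < (q + 2) * rPlus (q + 3)) :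
    ∃ a b c : ℕ, c ≤ a ∧ c ≤ b ∧ b ≤ q + 1 ∧ c ≤ q + 1 ∧
      x + c = a * rMinus (q + 3) + b * rPlus (q + 3) := by
  obtain ⟨-, a, b, c, hca, hcb, h⟩ := mem_SYp_iff.1 hx
  refine ⟨a, b, c, hca, hcb, ?_, ?_, h⟩
  · have : c ≤ a * rMinus (q + 3) :=
      hca.trans (Nat.le_mul_of_pos_right a (rMinus_pos q))
    by_contra! hb
    have := Nat.mul_le_mul_right (rPlus (q + 3)) (show q + 2 ≤ b by omega)
    omega
  · have hlev := (mul_le_and_le_mul_of_add_eq (rMinus_lt_rPlus q) hcb h).1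
    have : (q + 2) * rPlus (q + 3) < (q + 3) * rMinus (q + 3) := by
      rw [rMinus_eq, rPlus_eq]; nlinarith
    have := Nat.lt_of_mul_lt_mul_right (hlev.trans_lt (hlt.trans this))
    omega

theorem lattice_add_le_of_mem_SYp {y : ℕ}
    (hv : a * rMinus (q + 3) + b * rPlus (q + 3) ≤ 2 * rMinus (q + 3) + q * rPlus (q + 3))
    (hy : y ∈ SYp (q + 3)) (hlt : a * rMinus (q + 3) + b * rPlus (q + 3) < y) :
    a * rMinus (q + 3) + b * rPlus (q + 3) + (q + 5) ≤ y := by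
  have hb : b ≤ q + 1 := by rcases lattice_cases hv with h | h | h <;> omega
  rcases lt_or_ge y ((q + 2) * rPlus (q + 3)) with hy' | hy'
  · obtain ⟨a', b', c, -, -, hb', hc, he⟩ := exists_lattice_of_mem_SYp hy hy'
    have := lattice_add_le_of_lt hb hb' (he ▸ hlt.trans_le (Nat.le_add_right y c))
    omega
  · have := bound_add_eq q
    omega

theorem add_le_lattice_of_mem_SYp {y : ℕ}
    (hv : a * rMinus (q + 3) + b * rPlus (q + 3) ≤ 2 * rMinus (q + 3) + q * rPlus (q + 3))
    (hy : y ∈ SYp (q + 3)) (hlt : y + min a b < a * rMinus (q + 3) + b * rPlus (q + 3)) :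
    y + 2 * (q + 3) ≤ a * rMinus (q + 3) + b * rPlus (q + 3) := by
  have hb : b ≤ q + 1 := by rcases lattice_cases hv with h | h | h <;> omega
  have := bound_add_eq q
  obtain ⟨a', b', c, hca, hcb, hb', hc, he⟩ := exists_lattice_of_mem_SYp hy (by omega)
  rcases lt_trichotomy (a' * rMinus (q + 3) + b' * rPlus (q + 3))
    (a * rMinus (q + 3) + b * rPlus (q + 3)) with h | h | h
  · have := lattice_add_le_of_lt hb' hb h
    omega
  · obtain ⟨rfl, rfl⟩ := lattice_inj hb' hb h
    omega
  · have := lattice_add_le_of_lt hb hb' h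
    omega

theorem lattice_add_mem_QYp (ha : a ≤ q + 2) (hb : b ≤ q) :
    a * rMinus (q + 3) + b * rPlus (q + 3) + (q + 4) ∈ QYp (q + 3) := by
  obtain ⟨a', ha'⟩ : ∃ a', a + a' = q + 2 := ⟨q + 2 - a, by omega⟩
  obtain ⟨b', hb'⟩ : ∃ b', b + b' = q := ⟨q - b, by omega⟩
  have hsum : a * rMinus (q + 3) + b * rPlus (q + 3) + (q + 4) +
      (a' * rMinus (q + 3) + b' * rPlus (q + 3)) = NP (q + 3) := by
    rw [NP_eq, show (q + 2) * rMinus (q + 3) + q * rPlus (q + 3) =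
      (a + a') * rMinus (q + 3) + (b + b') * rPlus (q + 3) by rw [ha', hb']]
    ring
  exact mem_QYp_of_add_eq (lattice_mem_SYp (a := a') (b := b') (by omega)) hsum

theorem exists_mem_QYp_add_eq_lattice (ha : a ≤ q + 1) (hb : b ≤ q + 1) (hab : 1 ≤ a + b) :
    ∃ t ∈ QYp (q + 3), t + (q + 2) = a * rMinus (q + 3) + b * rPlus (q + 3) := by
  obtain ⟨a', ha'⟩ : ∃ a', a + a' = q + 1 := ⟨q + 1 - a, by omega⟩
  obtain ⟨b', hb'⟩ : ∃ b', b + b' = q + 1 := ⟨q + 1 - b, by omega⟩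
  have hsum : a * rMinus (q + 3) + b * rPlus (q + 3) +
      (a' * rMinus (q + 3) + b' * rPlus (q + 3)) = NP (q + 3) + (q + 2) := by
    rw [NP_add, show (q + 1) * rMinus (q + 3) + (q + 1) * rPlus (q + 3) =
      (a + a') * rMinus (q + 3) + (b + b') * rPlus (q + 3) by rw [ha', hb']]
    ring
  have hle : q + 2 ≤ a * rMinus (q + 3) + b * rPlus (q + 3) := by
    have := add_mul_rMinus_le_lattice (q := q) a b
    have := Nat.mul_le_mul_right (rMinus (q + 3)) hab
    have : q + 2 ≤ rMinus (q + 3) := by rw [rMinus_eq]; nlinarith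
    omega
  have hs := lattice_mem_SYp (q := q) (a := a') (b := b') (by omega)
  refine ⟨_, mem_QYp_of_add_eq hs ?_, Nat.sub_add_cancel hle⟩
  omega

theorem mem_SYp_of_mem_dsRun {p x y : ℕ} (hx : x ∈ SYp p) (hy : y ∈ dsRun (XYp p) (ΔYp p) x) :
    y ∈ SYp p := by
  rw [mem_dsRun] at hy
  exact ΔYp_pos_iff.1 ((hy.2 y hy.1 (min_le_right _ _) (le_max_right _ _)).2 (ΔYp_pos_iff.2 hx))

theorem redDelta_XYp_eq_card {p x : ℕ} (hx : x ∈ SYp p) :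
    redDelta (XYp p) (ΔYp p) x = (dsRun (XYp p) (ΔYp p) x).card := by
  rw [redDelta, Finset.sum_congr rfl fun y hy => ΔYp_of_mem (mem_SYp_of_mem_dsRun hx hy)]
  simp

theorem ge_of_mem_dsRun_XYp {p x lo t : ℕ} (ht : t ∈ QYp p) (htlo : t < lo) (hlox : lo ≤ x)
    (hx : x ∈ SYp p) (hgap : ∀ z ∈ SYp p, t ≤ z → lo ≤ z) :
    ∀ y ∈ dsRun (XYp p) (ΔYp p) x, lo ≤ y := fun _ hy =>
  ge_of_mem_dsRun (Finset.mem_union_right _ ht) htlo hlox (fun z _ h₁ h₂ h =>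
    h₂.not_ge (hgap z (ΔYp_pos_iff.1 (h.2 (ΔYp_pos_iff.2 hx))) h₁)) hy

theorem le_of_mem_dsRun_XYp {p x hi t : ℕ} (ht : t ∈ QYp p) (hhit : hi < t) (hxhi : x ≤ hi)
    (hx : x ∈ SYp p) (hgap : ∀ z ∈ SYp p, hi < z → t < z) :
    ∀ y ∈ dsRun (XYp p) (ΔYp p) x, y ≤ hi := fun _ hy =>
  le_of_mem_dsRun (Finset.mem_union_right _ ht) hhit hxhi (fun z _ h₁ h₂ h =>
    h₂.not_gt (hgap z (ΔYp_pos_iff.1 (h.2 (ΔYp_pos_iff.2 hx))) h₁)) hy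

theorem dsRun_XYp_eq_filter {p x lo hi : ℕ} (hlo : lo ≤ x) (hhi : x ≤ hi)
    (hS : ∀ z ∈ XYp p, lo ≤ z → z ≤ hi → z ∈ SYp p)
    (hge : ∀ y ∈ dsRun (XYp p) (ΔYp p) x, lo ≤ y) (hle : ∀ y ∈ dsRun (XYp p) (ΔYp p) x, y ≤ hi)
    (hx : x ∈ XYp p) :
    dsRun (XYp p) (ΔYp p) x = (XYp p).filter (fun y => lo ≤ y ∧ y ≤ hi) :=
  dsRun_eq_filter hlo hhi (fun z hz h₁ h₂ => by
    rw [ΔYp_pos_iff, ΔYp_pos_iff]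
    exact iff_of_true (hS z hz h₁ h₂) (hS x hx hlo hhi)) hge hle

theorem dsRun_lattice (ha : a ≤ q + 1) (hb : b ≤ q) (hab : a + b ≤ q + 2) :
    dsRun (XYp (q + 3)) (ΔYp (q + 3)) (a * rMinus (q + 3) + b * rPlus (q + 3)) =
      Finset.Icc (a * rMinus (q + 3) + b * rPlus (q + 3) - min a b)
        (a * rMinus (q + 3) + b * rPlus (q + 3)) := by
  set v := a * rMinus (q + 3) + b * rPlus (q + 3) with hv_def
  have hv := lattice_le_bound hab hb
  have hvN := bound_lt_NP q
  have hblock : ∀ z, v - min a b ≤ z → z ≤ v → z ∈ SYp (q + 3) := fun z h₁ h₂ =>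
    mem_SYp_iff.2 ⟨by omega, a, b, v - z, by omega, by omega, by omega⟩
  have hvS := hblock v (Nat.sub_le _ _) le_rfl
  have hle := le_of_mem_dsRun_XYp (lattice_add_mem_QYp (a := a) (by omega) hb) (by omega) le_rfl
    hvS fun z hz h => by have := lattice_add_le_of_mem_SYp hv hz h; omega
  have hge : ∀ y ∈ dsRun (XYp (q + 3)) (ΔYp (q + 3)) v, v - min a b ≤ y := by
    rcases Nat.eq_zero_or_pos (a + b) with h0 | hpos
    · obtain ⟨rfl, rfl⟩ : a = 0 ∧ b = 0 := by omega
      simp [hv_def]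
    · obtain ⟨t, ht, htv⟩ := exists_mem_QYp_add_eq_lattice (by omega) (by omega) hpos
      refine ge_of_mem_dsRun_XYp ht (by omega) (Nat.sub_le _ _) hvS fun z hz h => ?_
      by_contra! h'
      have := add_le_lattice_of_mem_SYp hv hz (by omega)
      omega
  rw [dsRun_XYp_eq_filter (Nat.sub_le _ _) le_rfl (fun z _ => hblock z) hge hle
    (SYp_subset_XYp hvS)]
  ext y
  simp only [Finset.mem_filter, Finset.mem_Icc]
  exact ⟨And.right, fun h => ⟨SYp_subset_XYp (hblock y h.1 h.2), h⟩⟩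

theorem redDelta_lattice (ha : a ≤ q + 1) (hb : b ≤ q) (hab : a + b ≤ q + 2) :
    redDelta (XYp (q + 3)) (ΔYp (q + 3)) (a * rMinus (q + 3) + b * rPlus (q + 3)) =
      (min a b : ℤ) + 1 := by
  have hmin : min a b ≤ a * rMinus (q + 3) + b * rPlus (q + 3) :=
    calc min a b ≤ (a + b) * 1 := by omega
      _ ≤ (a + b) * rMinus (q + 3) := Nat.mul_le_mul_left _ (rMinus_pos q)
      _ ≤ _ := add_mul_rMinus_le_lattice a b
  have hS := lattice_mem_SYp ((lattice_le_bound hab hb).trans (bound_lt_NP q).le)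
  rw [redDelta_XYp_eq_card hS, dsRun_lattice ha hb hab, Nat.card_Icc]
  omega

theorem lattice_mem_redSet (ha : a ≤ q + 1) (hb : b ≤ q) (hab : a + b ≤ q + 2) :
    a * rMinus (q + 3) + b * rPlus (q + 3) ∈ redSet (XYp (q + 3)) (ΔYp (q + 3)) := by
  have hS := lattice_mem_SYp ((lattice_le_bound hab hb).trans (bound_lt_NP q).le)
  rw [mem_redSet_iff_of_pos (ΔYp_pos_iff.2 hS), dsRun_lattice ha hb hab]
  exact ⟨SYp_subset_XYp hS, fun y hy => (Finset.mem_Icc.1 hy).2⟩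

/-! In the names below, `mergedLow` is `(p - 2) r₊ = (q + 1) r₊` and `mergedHigh` is
`(p - 1) r₋ = (q + 2) r₋`; these two form a single run. -/

theorem mergedLow_add_eq_mergedHigh (q : ℕ) :
    (q + 1) * rPlus (q + 3) + 3 * (q + 3) = (q + 2) * rMinus (q + 3) := by
  rw [rMinus_eq, rPlus_eq]; ring

/-- `S` meets no interval `(k r₊, (k + 1) r₋)`; for the `Q`-half, `Q = N - S` maps this gap
into `(q r₊, (q + 1) r₋)`. -/
theorem not_mem_XYp_of_lt_of_lt {z : ℕ} (hz : z ∈ XYp (q + 3))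
    (h₁ : (q + 1) * rPlus (q + 3) < z) (h₂ : z < (q + 2) * rMinus (q + 3)) : False := by
  rcases Finset.mem_union.1 hz with hS | hQ
  · have := SYp_le_or_le hS (q + 1)
    rw [show q + 1 + 1 = q + 2 from rfl] at this
    omega
  · obtain ⟨s, hs, hsum⟩ := exists_add_eq_of_mem_QYp hQ
    have := NP_eq q
    have := NP_add q
    rcases SYp_le_or_le hs q with h | h <;> omega

theorem mergedHigh_le_bound (q : ℕ) :
    (q + 2) * rMinus (q + 3) ≤ 2 * rMinus (q + 3) + q * rPlus (q + 3) := by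
  simpa using lattice_le_bound (q := q) (a := q + 2) (b := 0) le_rfl (Nat.zero_le q)

theorem mergedLow_le_bound (q : ℕ) :
    (q + 1) * rPlus (q + 3) ≤ 2 * rMinus (q + 3) + q * rPlus (q + 3) := by
  rw [rMinus_eq, rPlus_eq]; nlinarith

theorem mergedHigh_mem_SYp (q : ℕ) : (q + 2) * rMinus (q + 3) ∈ SYp (q + 3) := by
  simpa using lattice_mem_SYp (q := q) (a := q + 2) (b := 0)
    (by simpa using (mergedHigh_le_bound q).trans (bound_lt_NP q).le)

theorem mergedLow_mem_SYp (q : ℕ) : (q + 1) * rPlus (q + 3) ∈ SYp (q + 3) := by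
  simpa using lattice_mem_SYp (q := q) (a := 0) (b := q + 1)
    (by simpa using (mergedLow_le_bound q).trans (bound_lt_NP q).le)

theorem dsRun_mergedHigh :
    dsRun (XYp (q + 3)) (ΔYp (q + 3)) ((q + 2) * rMinus (q + 3)) =
      {(q + 1) * rPlus (q + 3), (q + 2) * rMinus (q + 3)} := by
  have hgap := mergedLow_add_eq_mergedHigh q
  have hhiS := mergedHigh_mem_SYp q
  have hloS := mergedLow_mem_SYp q
  have hS : ∀ z ∈ XYp (q + 3), (q + 1) * rPlus (q + 3) ≤ z → z ≤ (q + 2) * rMinus (q + 3) →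
      z = (q + 1) * rPlus (q + 3) ∨ z = (q + 2) * rMinus (q + 3) := fun z hz h₁ h₂ => by
    by_contra! h
    exact not_mem_XYp_of_lt_of_lt hz (lt_of_le_of_ne h₁ h.1.symm) (lt_of_le_of_ne h₂ h.2)
  have htQ : (q + 2) * rMinus (q + 3) + (q + 4) ∈ QYp (q + 3) := by
    simpa using lattice_add_mem_QYp (q := q) (a := q + 2) (b := 0) le_rfl (Nat.zero_le q)
  have hle := le_of_mem_dsRun_XYp htQ (by omega) le_rfl hhiS fun z hz h => by
    have := lattice_add_le_of_mem_SYp (a := q + 2) (b := 0)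
      (by simpa using mergedHigh_le_bound q) hz (by simpa using h)
    simp only [zero_mul, add_zero] at this
    omega
  obtain ⟨t, ht, htlo⟩ := exists_mem_QYp_add_eq_lattice (q := q) (a := 0) (b := q + 1)
    (by omega) (by omega) (by omega)
  rw [zero_mul, zero_add] at htlo
  have hge := ge_of_mem_dsRun_XYp (lo := (q + 1) * rPlus (q + 3)) ht (by omega) (by omega) hhiS
    fun z hz h => by
      by_contra! h'
      have := add_le_lattice_of_mem_SYp (a := 0) (b := q + 1)
        (by simpa using mergedLow_le_bound q) hz
        (by simp only [zero_mul, zero_add, Nat.zero_min]; omega)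
      simp only [zero_mul, zero_add] at this
      omega
  rw [dsRun_XYp_eq_filter (by omega) le_rfl (fun z hz h₁ h₂ => by
    rcases hS z hz h₁ h₂ with rfl | rfl <;> assumption) hge hle (SYp_subset_XYp hhiS)]
  ext y
  simp only [Finset.mem_filter, Finset.mem_insert, Finset.mem_singleton]
  constructor
  · exact fun ⟨hy, h₁, h₂⟩ => hS y hy h₁ h₂
  · rintro (rfl | rfl)
    · exact ⟨SYp_subset_XYp hloS, le_rfl, by omega⟩
    · exact ⟨SYp_subset_XYp hhiS, by omega, le_rfl⟩

theorem redDelta_mergedHigh (q : ℕ) :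
    redDelta (XYp (q + 3)) (ΔYp (q + 3)) ((q + 2) * rMinus (q + 3)) = 2 := by
  have := mergedLow_add_eq_mergedHigh q
  rw [redDelta_XYp_eq_card (mergedHigh_mem_SYp q), dsRun_mergedHigh, Finset.card_pair (by omega)]
  rfl

theorem mergedHigh_mem_redSet (q : ℕ) :
    (q + 2) * rMinus (q + 3) ∈ redSet (XYp (q + 3)) (ΔYp (q + 3)) := by
  have := mergedLow_add_eq_mergedHigh q
  rw [mem_redSet_iff_of_pos (ΔYp_pos_iff.2 (mergedHigh_mem_SYp q)), dsRun_mergedHigh]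
  refine ⟨SYp_subset_XYp (mergedHigh_mem_SYp q), fun y hy => ?_⟩
  rcases Finset.mem_insert.1 hy with rfl | hy
  · omega
  · exact (Finset.mem_singleton.1 hy).le

theorem mergedLow_not_mem_redSet (q : ℕ) :
    (q + 1) * rPlus (q + 3) ∉ redSet (XYp (q + 3)) (ΔYp (q + 3)) := by
  intro h
  have hmem :
      (q + 2) * rMinus (q + 3) ∈ dsRun (XYp (q + 3)) (ΔYp (q + 3)) ((q + 1) * rPlus (q + 3)) :=
    mem_dsRun_symm (by rw [dsRun_mergedHigh]; simp) (SYp_subset_XYp (mergedHigh_mem_SYp q))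
  have := ((mem_redSet_iff_of_pos (ΔYp_pos_iff.2 (mergedLow_mem_SYp q))).1 h).2 _ hmem
  have := mergedLow_add_eq_mergedHigh q
  omega

/-- If `x + c = a r₋ + b r₊` with `0 < c ≤ min a b`, then also `x + 1 ∈ S`, so a positive
element of the reduced sequence (the top of its run) has `c = 0`. -/
theorem exists_lattice_of_mem_redSet (hx : x ∈ redSet (XYp (q + 3)) (ΔYp (q + 3)))
    (hpos : 0 < redDelta (XYp (q + 3)) (ΔYp (q + 3)) x) (hxN : x < NP (q + 3)) :
    ∃ a b : ℕ, a * rMinus (q + 3) + b * rPlus (q + 3) = x := by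
  have hΔ := pos_of_redDelta_pos hpos
  have hxS := ΔYp_pos_iff.1 hΔ
  have htop := ((mem_redSet_iff_of_pos hΔ).1 hx).2
  obtain ⟨-, a, b, c, hca, hcb, h⟩ := mem_SYp_iff.1 hxS
  refine ⟨a, b, ?_⟩
  obtain rfl | hc := Nat.eq_zero_or_pos c
  · exact h.symm
  have hx₁ : x + 1 ∈ SYp (q + 3) :=
    mem_SYp_iff.2 ⟨hxN, a, b, c - 1, by omega, by omega, by omega⟩
  have hmem : x + 1 ∈ dsRun (XYp (q + 3)) (ΔYp (q + 3)) x := by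
    refine mem_dsRun.2 ⟨SYp_subset_XYp hx₁, fun z _ h₁ h₂ => ?_⟩
    rw [ΔYp_pos_iff, ΔYp_pos_iff]
    have : z = x ∨ z = x + 1 := by omega
    rcases this with rfl | rfl <;> simp [hxS, hx₁]
  exact absurd (htop _ hmem) (by omega)

end BrieskornSphere

/-- description of the positive part `S̃` of the reduced delta sequence
`(X̃_{Y_p}, Δ̃_{Y_p})` of `Σ(p,2p-1,2p+1)` in the range `[0, 2r₋+(p-3)r₊]`:
(i) `S̃ ∩ [0, 2r₋+(p-3)r₊] = S(r₋,r₊) ∩ [0, 2r₋+(p-3)r₊] \ {(p-2)r₊}`;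
(ii) if `x = a·r₋ + b·r₊` lies there and `x ∉ {(p-2)r₊, (p-1)r₋}` then
`Δ̃_{Y_p}(x) = min{a,b} + 1`, while `Δ̃_{Y_p}((p-1)r₋) = 2`. -/
theorem stmt_4 (p : ℕ) (hp : 3 ≤ p) :
    (∀ x : ℕ, x ≤ 2 * rMinus p + (p - 3) * rPlus p →
      ((x ∈ redSet (XYp p) (ΔYp p) ∧ 0 < redDelta (XYp p) (ΔYp p) x) ↔
        (x ∈ AddSubmonoid.closure ({rMinus p, rPlus p} : Set ℕ) ∧ x ≠ (p - 2) * rPlus p))) ∧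
    (∀ a b : ℕ, a * rMinus p + b * rPlus p ≤ 2 * rMinus p + (p - 3) * rPlus p →
      a * rMinus p + b * rPlus p ∈ redSet (XYp p) (ΔYp p) →
      0 < redDelta (XYp p) (ΔYp p) (a * rMinus p + b * rPlus p) →
      a * rMinus p + b * rPlus p ≠ (p - 2) * rPlus p →
      a * rMinus p + b * rPlus p ≠ (p - 1) * rMinus p →
      redDelta (XYp p) (ΔYp p) (a * rMinus p + b * rPlus p) = (min a b : ℤ) + 1) ∧
    redDelta (XYp p) (ΔYp p) ((p - 1) * rMinus p) = 2 := by
  obtain ⟨q, rfl⟩ : ∃ q, p = q + 3 := ⟨p - 3, by omega⟩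
  simp only [show q + 3 - 1 = q + 2 by omega, show q + 3 - 2 = q + 1 by omega,
    Nat.add_sub_cancel, AddSubmonoid.mem_closure_pair, smul_eq_mul]
  refine ⟨fun x hx => ⟨fun ⟨hred, hpos⟩ => ?_, ?_⟩, fun a b hx _ _ hne₁ hne₂ => ?_,
    redDelta_mergedHigh q⟩
  · refine ⟨exists_lattice_of_mem_redSet hred hpos (hx.trans_lt (bound_lt_NP q)), ?_⟩
    rintro rfl
    exact mergedLow_not_mem_redSet q hred
  · rintro ⟨⟨a, b, rfl⟩, hne⟩
    rcases lattice_cases hx with ⟨ha, hb, hab⟩ | ⟨rfl, rfl⟩ | ⟨rfl, rfl⟩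
    · refine ⟨lattice_mem_redSet ha hb hab, ?_⟩
      rw [redDelta_lattice ha hb hab]
      positivity
    · simpa using ⟨mergedHigh_mem_redSet q, (redDelta_mergedHigh q).symm ▸ two_pos⟩
    · simp at hne
  · rcases lattice_cases hx with ⟨ha, hb, hab⟩ | ⟨rfl, rfl⟩ | ⟨rfl, rfl⟩
    · exact redDelta_lattice ha hb hab
    · simp at hne₂
    · simp at hne₁
end

section
/- Let p = 2ξ+1 with ξ ≥ 1 be odd, r₋ = p(2p−1), r₊ = p(2p+1), N_p = 4p³ − 8p² − p + 1, and K = (ξ−1)(r₋+r₊). Then {x ∈ S(r₋,r₊) : K ≤ x and 2x ≤ N_p} = {a·r₋ + b·r₊ : a,b ≥ 0, a+b = 2ξ−2, b ≥ ξ−1} ∪ {a·r₋ + b·r₊ : a,b ≥ 0, a+b = 2ξ−1, a ≥ ξ}. -/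
/-!
Write `p = 2m + 3`. Then `a r₋ + b r₊ = p ((4m + 5)(a + b) + 2b)`, and since `0 ≤ b ≤ a + b` the
cofactor `t = (4m + 5)(a + b) + 2b` lies between `(4m + 5) n` and `(4m + 7) n` for `n = a + b`.
After dividing by `p`, the window `K ≤ x ≤ N_p / 2` reads `4m(2m + 3) ≤ t ≤ 8m² + 16m + 5`, which
leaves only the lengths `n = 2m` and `n = 2m + 1`; for these it cuts out `b ≥ m` and `b ≤ m`.
-/

namespace BrieskornDelta

lemma combination_eq (m a b : ℕ) :
    a * ((2*m+3) * (4*m+5)) + b * ((2*m+3) * (4*m+7)) = (2*m+3) * ((4*m+5) * (a+b) + 2*b) := by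
  ring

lemma lower_bound_iff (m t : ℕ) :
    m * ((2*m+3) * (4*m+5) + (2*m+3) * (4*m+7)) ≤ (2*m+3) * t ↔ 4*m*(2*m+3) ≤ t := by
  rw [show m * ((2*m+3) * (4*m+5) + (2*m+3) * (4*m+7)) = (2*m+3) * (4*m*(2*m+3)) by ring]
  exact Nat.mul_le_mul_left_iff (by omega)

lemma upper_bound_iff (m t : ℕ) :
    2 * ((2*m+3) * t) ≤ 32*m^3 + 112*m^2 + 118*m + 34 ↔ t ≤ 8*m^2 + 16*m + 5 := by
  constructor
  · intro h
    by_contra! ht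
    nlinarith
  · intro h
    nlinarith

lemma window_iff (m a b : ℕ) :
    4*m*(2*m+3) ≤ (4*m+5)*(a+b) + 2*b ∧ (4*m+5)*(a+b) + 2*b ≤ 8*m^2 + 16*m + 5 ↔
      (a+b = 2*m ∧ m ≤ b) ∨ (a+b = 2*m+1 ∧ m+1 ≤ a) := by
  constructor
  · rintro ⟨hlo, hhi⟩
    have hn_ge : 2*m ≤ a+b := by
      by_contra! h
      nlinarith
    have hn_le : a+b ≤ 2*m+1 := by
      by_contra! h
      nlinarith
    rcases (by omega : a+b = 2*m ∨ a+b = 2*m+1) with hn | hn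
    · rw [hn] at hlo
      left; exact ⟨hn, by nlinarith⟩
    · rw [hn] at hhi
      right; exact ⟨hn, by nlinarith⟩
  · rintro (⟨hn, hb⟩ | ⟨hn, ha⟩) <;> rw [hn] <;> constructor <;> nlinarith

lemma mem_window_iff {p ξ : ℕ} (hξ : 1 ≤ ξ) (hp : p = 2*ξ + 1) (a b : ℕ) :
    (ξ - 1) * (p * (2*p - 1) + p * (2*p + 1)) ≤ a * (p * (2*p - 1)) + b * (p * (2*p + 1)) ∧
        2 * (a * (p * (2*p - 1)) + b * (p * (2*p + 1))) ≤ 4*p^3 - 8*p^2 - p + 1 ↔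
      (a + b = 2*ξ - 2 ∧ ξ - 1 ≤ b) ∨ (a + b = 2*ξ - 1 ∧ ξ ≤ a) := by
  obtain ⟨m, rfl⟩ : ∃ m, ξ = m + 1 := ⟨ξ - 1, by omega⟩
  subst hp
  have hN : 4*(2*(m+1)+1)^3 - 8*(2*(m+1)+1)^2 - (2*(m+1)+1) + 1 =
      32*m^3 + 112*m^2 + 118*m + 34 := by
    have h3 : 4*(2*(m+1)+1)^3 = 32*m^3 + 144*m^2 + 216*m + 108 := by ring
    have h2 : 8*(2*(m+1)+1)^2 = 32*m^2 + 96*m + 72 := by ring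
    omega
  rw [hN, Nat.add_sub_cancel, show 2*(2*(m+1)+1) - 1 = 4*m+5 by omega,
    show 2*(2*(m+1)+1) + 1 = 4*m+7 by omega, show 2*(m+1)+1 = 2*m+3 by ring,
    combination_eq, lower_bound_iff, upper_bound_iff, window_iff]
  omega

end BrieskornDelta

open BrieskornDelta in
/-- for odd `p = 2ξ+1`, `r₋ = p(2p-1)`, `r₊ = p(2p+1)`,
`N_p = 4p³-8p²-p+1`, `K = (ξ-1)(r₋+r₊)`, the elements of `S(r₋,r₊)` in `[K, N_p/2]`
are exactly those `a·r₋ + b·r₊` with `a+b = 2ξ-2, b ≥ ξ-1` or `a+b = 2ξ-1, a ≥ ξ`. -/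
theorem stmt_5 (p ξ : ℕ) (hξ : 1 ≤ ξ) (hp : p = 2*ξ + 1) :
    {x : ℕ | x ∈ AddSubmonoid.closure ({p * (2*p - 1), p * (2*p + 1)} : Set ℕ) ∧
        (ξ - 1) * (p * (2*p - 1) + p * (2*p + 1)) ≤ x ∧ 2*x ≤ 4*p^3 - 8*p^2 - p + 1} =
      {x : ℕ | ∃ a b : ℕ, a + b = 2*ξ - 2 ∧ ξ - 1 ≤ b ∧
          x = a * (p * (2*p - 1)) + b * (p * (2*p + 1))} ∪
      {x : ℕ | ∃ a b : ℕ, a + b = 2*ξ - 1 ∧ ξ ≤ a ∧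
          x = a * (p * (2*p - 1)) + b * (p * (2*p + 1))} := by
  ext x
  simp only [Set.mem_ofPred_eq, Set.mem_union, AddSubmonoid.mem_closure_pair, smul_eq_mul]
  constructor
  · rintro ⟨⟨a, b, rfl⟩, hwin⟩
    rcases (mem_window_iff hξ hp a b).mp hwin with ⟨hn, hb⟩ | ⟨hn, ha⟩
    exacts [Or.inl ⟨a, b, hn, hb, rfl⟩, Or.inr ⟨a, b, hn, ha, rfl⟩]
  · rintro (⟨a, b, hn, hb, rfl⟩ | ⟨a, b, hn, ha, rfl⟩)
    exacts [⟨⟨a, b, rfl⟩, (mem_window_iff hξ hp a b).mpr (Or.inl ⟨hn, hb⟩)⟩,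
      ⟨⟨a, b, rfl⟩, (mem_window_iff hξ hp a b).mpr (Or.inr ⟨hn, ha⟩)⟩]
end

section
/- Let p = 2ξ+1 with ξ ≥ 1 be odd, r₋ = p(2p−1), r₊ = p(2p+1), N_p = 4p³ − 8p² − p + 1, and K = (ξ−1)(r₋+r₊). Then {x ∈ S(r₋,r₊) : 2x ≥ N_p and x ≤ N_p − K} = {a·r₋ + b·r₊ : a,b ≥ 0, a+b = 2ξ−1, a ≤ ξ−1} ∪ {a·r₋ + b·r₊ : a,b ≥ 0, a+b = 2ξ, a ≥ ξ+1}. -/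
/-!
Since `r∓ = 2p² ∓ p`, an element `a·r₋ + b·r₊` of `S(r₋, r₊)` equals `2p²·s + p·d` with `s = a + b`
and `d = b - a`, `|d| ≤ s`. The window `[N_p/2, N_p - K]` is `[2p³ - 4p² - ξ, 2p³ - 2p² - p + 1]`,
so the coarse term `2p²·s` forces `s ∈ {p - 2, p - 1}`; for `s = p - 2` the lower end requires
`d ≥ 0`, for `s = p - 1` the upper end requires `d < 0`.
-/

theorem brieskorn_window_iff {p ξ x : ℕ} (hξ : 1 ≤ ξ) (hp : p = 2*ξ + 1) :
    (4*p^3 - 8*p^2 - p + 1 ≤ 2*x ∧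
        x ≤ (4*p^3 - 8*p^2 - p + 1) - (ξ - 1) * (p * (2*p - 1) + p * (2*p + 1))) ↔
      (4*p^3 + 1 ≤ 2*x + 8*p^2 + p ∧ x + 2*p^2 + p ≤ 2*p^3 + 1) := by
  have hp3 : 3 ≤ p := by omega
  have hN : 8*p^2 + p ≤ 4*p^3 := by nlinarith
  have hNK : 2*p^2 + p ≤ 2*p^3 := by nlinarith
  have hsum : p * (2*p - 1) + p * (2*p + 1) = 4*p^2 := by
    rw [← mul_add, show 2*p - 1 + (2*p + 1) = 4*p by omega]; ring
  have hK : (ξ - 1) * (4*p^2) + 6*p^2 = 2*p^3 := by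
    rw [show p = 2*(ξ - 1) + 3 by omega]; ring
  rw [hsum]
  generalize (ξ - 1) * (4*p^2) = K at hK ⊢
  omega

theorem pair_combination_window_iff {p a b x : ℕ} (hp : 2 ≤ p)
    (hx : x = a * (p * (2*p - 1)) + b * (p * (2*p + 1))) :
    (4*p^3 + 1 ≤ 2*x + 8*p^2 + p ∧ x + 2*p^2 + p ≤ 2*p^3 + 1) ↔
      (a + b + 2 = p ∧ a ≤ b) ∨ (a + b + 1 = p ∧ b < a) := by
  have hxz : (x : ℤ) = 2*p^2*(a + b) + p*((b : ℤ) - a) := by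
    rw [hx]; push_cast [Nat.cast_sub (by omega : 1 ≤ 2*p)]; ring
  zify at hp ⊢
  rw [hxz]
  constructor
  · rintro ⟨hlo, hhi⟩
    have hs_lo : (p : ℤ) ≤ a + b + 2 := by
      by_contra! h
      nlinarith
    have hs_hi : (a : ℤ) + b + 1 ≤ p := by
      by_contra! h
      nlinarith
    rcases (show (a : ℤ) + b + 2 = p ∨ (a : ℤ) + b + 1 = p by omega) with hs | hs
    · refine .inl ⟨hs, ?_⟩
      by_contra! h
      nlinarith
    · refine .inr ⟨hs, ?_⟩
      by_contra! h
      nlinarith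
  · rintro (⟨hs, hab⟩ | ⟨hs, hab⟩) <;> rw [← hs] <;> constructor <;> nlinarith

/-- for odd `p = 2ξ+1`, `r₋ = p(2p-1)`, `r₊ = p(2p+1)`,
`N_p = 4p³-8p²-p+1`, `K = (ξ-1)(r₋+r₊)`, the elements of `S(r₋,r₊)` in `[N_p/2, N_p - K]`
are exactly those `a·r₋ + b·r₊` with `a+b = 2ξ-1, a ≤ ξ-1` or `a+b = 2ξ, a ≥ ξ+1`. -/
theorem stmt_6 (p ξ : ℕ) (hξ : 1 ≤ ξ) (hp : p = 2*ξ + 1) :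
    {x : ℕ | x ∈ AddSubmonoid.closure ({p * (2*p - 1), p * (2*p + 1)} : Set ℕ) ∧
        4*p^3 - 8*p^2 - p + 1 ≤ 2*x ∧
        x ≤ (4*p^3 - 8*p^2 - p + 1) - (ξ - 1) * (p * (2*p - 1) + p * (2*p + 1))} =
      {x : ℕ | ∃ a b : ℕ, a + b = 2*ξ - 1 ∧ a ≤ ξ - 1 ∧
          x = a * (p * (2*p - 1)) + b * (p * (2*p + 1))} ∪
      {x : ℕ | ∃ a b : ℕ, a + b = 2*ξ ∧ ξ + 1 ≤ a ∧
          x = a * (p * (2*p - 1)) + b * (p * (2*p + 1))} := by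
  have hp2 : 2 ≤ p := by omega
  ext x
  simp only [Set.mem_ofPred_eq, Set.mem_union, AddSubmonoid.mem_closure_pair, smul_eq_mul,
    brieskorn_window_iff hξ hp]
  constructor
  · rintro ⟨⟨a, b, rfl⟩, hwin⟩
    rcases (pair_combination_window_iff hp2 rfl).1 hwin with ⟨hs, hab⟩ | ⟨hs, hab⟩
    · exact .inl ⟨a, b, by omega, by omega, rfl⟩
    · exact .inr ⟨a, b, by omega, by omega, rfl⟩
  · rintro (⟨a, b, hs, ha, rfl⟩ | ⟨a, b, hs, ha, rfl⟩)
    · exact ⟨⟨a, b, rfl⟩, (pair_combination_window_iff hp2 rfl).2 (.inl ⟨by omega, by omega⟩)⟩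
    · exact ⟨⟨a, b, rfl⟩, (pair_combination_window_iff hp2 rfl).2 (.inr ⟨by omega, by omega⟩)⟩
end

section
/- Let p = 2ξ+1 with ξ ≥ 1 be odd, r₋ = p(2p−1), r₊ = p(2p+1), and N_p = 4p³ − 8p² − p + 1. Then the following interleaving inequalities hold (all as inequalities of integers): (a) (ξ−1−j)r₋ + (ξ−1+j)r₊ < N_p − (ξ+1+j)r₋ − (ξ−1−j)r₊ for 0 ≤ j ≤ ξ−1; (b) N_p − (ξ+1+j)r₋ − (ξ−1−j)r₊ < (ξ−2−j)r₋ + (ξ+j)r₊ for 0 ≤ j ≤ ξ−2; (c) j·r₊ + (2ξ−1−j)r₋ < N_p − (j+1)r₋ − (2ξ−2−j)r₊ for 0 ≤ j ≤ ξ−2; (d) N_p − (j+1)r₋ − (2ξ−2−j)r₊ < (j+1)r₊ + (2ξ−2−j)r₋ for 0 ≤ j ≤ ξ−2; (e) N_p − 2ξ·r₋ < (2ξ−1)r₋; (f) N_p − (ξ−1)r₋ − ξ·r₊ < ξ·r₋ + (ξ−1)r₊. -/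
/-!
Moving the subtracted multiples of `r₋` and `r₊` to the other side, each inequality compares
`s·r₋ + t·r₊` with `N_p`, and the index `j` cancels. The coefficient sums `(s, t)` are
`(p-1, p-3)` in (a) and (c), `(p-2, p-2)` in (b), (d) and (f), and `(2p-3, 0)` in (e);
the corresponding combinations differ from `N_p` by `-(p+1)`, `p-1` and `4p-1`.
-/

section Identities

variable {R : Type*} [CommRing R] (p : R)

theorem shifted_sum_eq :
    (p - 1) * (p * (2*p - 1)) + (p - 3) * (p * (2*p + 1)) =
      (4*p^3 - 8*p^2 - p + 1) - (p + 1) := by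
  ring

theorem balanced_sum_eq :
    (p - 2) * (p * (2*p - 1)) + (p - 2) * (p * (2*p + 1)) =
      (4*p^3 - 8*p^2 - p + 1) + (p - 1) := by
  ring

theorem minus_only_sum_eq :
    (2*p - 3) * (p * (2*p - 1)) = (4*p^3 - 8*p^2 - p + 1) + (4*p - 1) := by
  ring

end Identities

/-- interleaving inequalities for odd `p = 2ξ+1`, `r₋ = p(2p-1)`,
`r₊ = p(2p+1)`, `N_p = 4p³ - 8p² - p + 1`. -/
theorem stmt_7 (p ξ : ℤ) (hξ : 1 ≤ ξ) (hp : p = 2*ξ + 1) :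
    (∀ j : ℤ, 0 ≤ j → j ≤ ξ - 1 →
      (ξ - 1 - j) * (p * (2*p - 1)) + (ξ - 1 + j) * (p * (2*p + 1)) <
        (4*p^3 - 8*p^2 - p + 1) - (ξ + 1 + j) * (p * (2*p - 1))
          - (ξ - 1 - j) * (p * (2*p + 1))) ∧
    (∀ j : ℤ, 0 ≤ j → j ≤ ξ - 2 →
      (4*p^3 - 8*p^2 - p + 1) - (ξ + 1 + j) * (p * (2*p - 1))
          - (ξ - 1 - j) * (p * (2*p + 1)) <
        (ξ - 2 - j) * (p * (2*p - 1)) + (ξ + j) * (p * (2*p + 1))) ∧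
    (∀ j : ℤ, 0 ≤ j → j ≤ ξ - 2 →
      j * (p * (2*p + 1)) + (2*ξ - 1 - j) * (p * (2*p - 1)) <
        (4*p^3 - 8*p^2 - p + 1) - (j + 1) * (p * (2*p - 1))
          - (2*ξ - 2 - j) * (p * (2*p + 1))) ∧
    (∀ j : ℤ, 0 ≤ j → j ≤ ξ - 2 →
      (4*p^3 - 8*p^2 - p + 1) - (j + 1) * (p * (2*p - 1))
          - (2*ξ - 2 - j) * (p * (2*p + 1)) <
        (j + 1) * (p * (2*p + 1)) + (2*ξ - 2 - j) * (p * (2*p - 1))) ∧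
    ((4*p^3 - 8*p^2 - p + 1) - 2*ξ * (p * (2*p - 1)) < (2*ξ - 1) * (p * (2*p - 1))) ∧
    ((4*p^3 - 8*p^2 - p + 1) - (ξ - 1) * (p * (2*p - 1)) - ξ * (p * (2*p + 1)) <
      ξ * (p * (2*p - 1)) + (ξ - 1) * (p * (2*p + 1))) := by
  have hsucc : 0 < p + 1 := by omega
  have hpred : 0 < p - 1 := by omega
  have hfour : 0 < 4*p - 1 := by omega
  refine ⟨fun j _ _ => ?_, fun j _ _ => ?_, fun j _ _ => ?_, fun j _ _ => ?_, ?_, ?_⟩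
  all_goals subst hp
  · linear_combination shifted_sum_eq (2*ξ + 1) + hsucc
  · linear_combination -balanced_sum_eq (2*ξ + 1) + hpred
  · linear_combination shifted_sum_eq (2*ξ + 1) + hsucc
  · linear_combination -balanced_sum_eq (2*ξ + 1) + hpred
  · linear_combination -minus_only_sum_eq (2*ξ + 1) + hfour
  · linear_combination -balanced_sum_eq (2*ξ + 1) + hpred
end

section
/- Let p, q, r be pairwise coprime integers ≥ 2, N = pqr − pq − pr − qr, S_Y = S(pq,pr,qr) ∩ [0,N], Q_Y = {N − s : s ∈ S_Y}, and assume S_Y ∩ Q_Y = ∅ (which holds by a result of Can–Karakurt). Let (X̃, Δ̃) be the reduced form of the abstract delta sequence (X_Y, Δ_Y), where X_Y = S_Y ∪ Q_Y and Δ_Y = +1 on S_Y, −1 on Q_Y. Then the reduced sequence is symmetric under the reflection x ↦ N − x: for every x ∈ X̃, also N − x ∈ X̃, and Δ̃(N − x) = −Δ̃(x). -/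
/-! The reflection `x ↦ N - x` is an order-reversing involution of `X_Y` that negates `Δ_Y`.
It therefore carries each maximal run of constant sign onto a maximal run of the opposite sign,
reversing the order: the largest element of a positive run goes to the smallest element of a
negative run and vice versa, and the run sums change sign. -/

section Reflection

variable {α : Type*} [LinearOrder α] {X : Finset α} {Δ : α → ℤ} {σ : α → α}

lemma mem_dsRun_map (hσ : Function.Involutive σ) (hanti : Antitone σ)
    (hX : ∀ x ∈ X, σ x ∈ X) (hΔ : ∀ x ∈ X, Δ (σ x) = -Δ x) (h0 : ∀ x ∈ X, Δ x ≠ 0)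
    {x y : α} (hx : x ∈ X) (hy : y ∈ dsRun X Δ x) : σ y ∈ dsRun X Δ (σ x) := by
  simp only [dsRun, Finset.mem_filter] at hy ⊢
  obtain ⟨hyX, hrun⟩ := hy
  refine ⟨hX y hyX, fun z hz hlo hhi => ?_⟩
  have hmin : σ (max (σ x) (σ y)) = min x y := by rw [hanti.map_max, hσ x, hσ y]
  have hmax : σ (min (σ x) (σ y)) = max x y := by rw [hanti.map_min, hσ x, hσ y]
  have hsign := hrun (σ z) (hX z hz) (hmin ▸ hanti hhi) (hmax ▸ hanti hlo)
  have hz' : Δ z = -Δ (σ z) := by rw [← hΔ _ (hX z hz), hσ z]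
  have := h0 z hz
  have := h0 x hx
  rw [hz', hΔ x hx]
  omega

lemma dsRun_map (hσ : Function.Involutive σ) (hanti : Antitone σ)
    (hX : ∀ x ∈ X, σ x ∈ X) (hΔ : ∀ x ∈ X, Δ (σ x) = -Δ x) (h0 : ∀ x ∈ X, Δ x ≠ 0)
    {x : α} (hx : x ∈ X) : dsRun X Δ (σ x) = (dsRun X Δ x).image σ := by
  classical
  refine Finset.Subset.antisymm (fun y hy => ?_) (Finset.image_subset_iff.mpr
    fun y hy => mem_dsRun_map hσ hanti hX hΔ h0 hx hy)
  have := mem_dsRun_map hσ hanti hX hΔ h0 (hX x hx) hy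
  rw [hσ x] at this
  exact Finset.mem_image.mpr ⟨σ y, this, hσ y⟩

lemma map_mem_redSet (hσ : Function.Involutive σ) (hanti : Antitone σ)
    (hX : ∀ x ∈ X, σ x ∈ X) (hΔ : ∀ x ∈ X, Δ (σ x) = -Δ x) (h0 : ∀ x ∈ X, Δ x ≠ 0)
    {x : α} (hx : x ∈ redSet X Δ) : σ x ∈ redSet X Δ := by
  classical
  simp only [redSet, Finset.mem_filter] at hx ⊢
  obtain ⟨hxX, hend⟩ := hx
  simp only [dsRun_map hσ hanti hX hΔ h0 hxX, Finset.forall_mem_image, hΔ x hxX,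
    Left.neg_pos_iff, Left.neg_neg_iff]
  refine ⟨hX x hxX, hend.symm.imp ?_ ?_⟩
  · exact fun ⟨hneg, hfirst⟩ => ⟨hneg, fun y hy => hanti (hfirst y hy)⟩
  · exact fun ⟨hpos, hlast⟩ => ⟨hpos, fun y hy => hanti (hlast y hy)⟩

lemma redDelta_map (hσ : Function.Involutive σ) (hanti : Antitone σ)
    (hX : ∀ x ∈ X, σ x ∈ X) (hΔ : ∀ x ∈ X, Δ (σ x) = -Δ x) (h0 : ∀ x ∈ X, Δ x ≠ 0)
    {x : α} (hx : x ∈ X) : redDelta X Δ (σ x) = -redDelta X Δ x := by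
  classical
  rw [redDelta, redDelta, dsRun_map hσ hanti hX hΔ h0 hx,
    Finset.sum_image hσ.injective.injOn, ← Finset.sum_neg_distrib]
  exact Finset.sum_congr rfl fun y hy => hΔ y (Finset.mem_filter.mp hy).1

end Reflection

section Swap

variable {α : Type*} [DecidableEq α] {S : Finset α} {σ : α → α}

lemma map_mem_union_image (hσ : Function.Involutive σ) {x : α} (hx : x ∈ S ∪ S.image σ) :
    σ x ∈ S ∪ S.image σ := by
  rw [Finset.mem_union, hσ.injective.mem_finset_image]
  rcases Finset.mem_union.mp hx with hxS | hxσS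
  · exact Or.inr hxS
  · obtain ⟨y, hyS, rfl⟩ := Finset.mem_image.mp hxσS
    exact Or.inl ((hσ y).symm ▸ hyS)

lemma sign_map_of_disjoint_image (hσ : Function.Involutive σ)
    (hdisj : Disjoint S (S.image σ)) {Δ : α → ℤ} (hΔ : ∀ x, Δ x = if x ∈ S then 1 else -1)
    {x : α} (hx : x ∈ S ∪ S.image σ) : Δ (σ x) = -Δ x := by
  rw [hΔ, hΔ]
  rcases Finset.mem_union.mp hx with hxS | hxσS
  · have : σ x ∉ S := Finset.disjoint_right.mp hdisj (Finset.mem_image_of_mem σ hxS)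
    rw [if_pos hxS, if_neg this]
  · obtain ⟨y, hyS, rfl⟩ := Finset.mem_image.mp hxσS
    rw [hσ y, if_pos hyS, if_neg (Finset.disjoint_right.mp hdisj hxσS), neg_neg]

end Swap

open Classical in
theorem stmt_9_general (N : ℤ) (SY : Finset ℤ)
    (QY : Finset ℤ) (hQY : QY = SY.image (fun s => N - s))
    (hdisj : Disjoint SY QY)
    (XY : Finset ℤ) (hXY : XY = SY ∪ QY)
    (Δ : ℤ → ℤ) (hΔ : ∀ x, Δ x = if x ∈ SY then 1 else -1) :
    ∀ x ∈ redSet XY Δ,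
      (N - x) ∈ redSet XY Δ ∧ redDelta XY Δ (N - x) = -redDelta XY Δ x := by
  subst hQY hXY
  have hσ : Function.Involutive (N - ·) := sub_sub_cancel N
  have hanti : Antitone (N - ·) := fun _ _ h => sub_le_sub_left h N
  have hX := fun x => map_mem_union_image (S := SY) (x := x) hσ
  have hsign := fun x => sign_map_of_disjoint_image hσ hdisj hΔ (x := x)
  have h0 : ∀ x ∈ SY ∪ SY.image (N - ·), Δ x ≠ 0 := fun x _ => by
    rw [hΔ]; split <;> decide
  intro x hx
  exact ⟨map_mem_redSet hσ hanti hX hsign h0 hx,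
    redDelta_map hσ hanti hX hsign h0 (Finset.mem_filter.mp hx).1⟩

open Classical in
/-- the reduced form of the abstract delta sequence of the Brieskorn sphere
`Σ(p,q,r)` is symmetric under the reflection `x ↦ N - x`: with `N = pqr - pq - pr - qr`,
`S_Y = S(pq, pr, qr) ∩ [0, N]`, `Q_Y = {N - s : s ∈ S_Y}` (assumed disjoint from `S_Y`),
`X_Y = S_Y ∪ Q_Y`, `Δ_Y = +1` on `S_Y` and `-1` on `Q_Y`, for every `x` in the reduced
set also `N - x` is in the reduced set and `Δ̃(N - x) = -Δ̃(x)`. -/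
theorem stmt_9 (p q r : ℕ) (hp : 2 ≤ p) (hq : 2 ≤ q) (hr : 2 ≤ r)
    (hpq : Nat.Coprime p q) (hpr : Nat.Coprime p r) (hqr : Nat.Coprime q r)
    (N : ℤ) (hN : N = (p : ℤ) * q * r - p * q - p * r - q * r)
    (SY : Finset ℤ)
    (hSY : SY = (Finset.Icc 0 N).filter
      (fun x => x ∈ AddSubmonoid.closure ({(p : ℤ) * q, (p : ℤ) * r, (q : ℤ) * r} : Set ℤ)))
    (QY : Finset ℤ) (hQY : QY = SY.image (fun s => N - s))
    (hdisj : Disjoint SY QY)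
    (XY : Finset ℤ) (hXY : XY = SY ∪ QY)
    (Δ : ℤ → ℤ) (hΔ : ∀ x, Δ x = if x ∈ SY then 1 else -1) :
    ∀ x ∈ redSet XY Δ,
      (N - x) ∈ redSet XY Δ ∧ redDelta XY Δ (N - x) = -redDelta XY Δ x :=
  stmt_9_general N SY QY hQY hdisj XY hXY Δ hΔ
end

section
/- Let Z₁ and Z₂ be 𝒢-complexes over 𝔽 = ℤ/2ℤ with fundamental classes f₁ of degree t₁ and f₂ of degree t₂, and let B₁, B₂ ≥ 0 be integers. Suppose that for ℓ = 1, 2 there are elements x^ℓ_i ∈ (Z_ℓ)_i, for each integer i with t_ℓ+1 ≤ i ≤ t_ℓ+4B_ℓ−2 and i ≢ t_ℓ+3 (mod 4), satisfying: ∂x^ℓ_{t_ℓ+1} = f_ℓ; ∂x^ℓ_{t_ℓ+2} = (1+j)x^ℓ_{t_ℓ+1}; ∂x^ℓ_i = s(1+j+j²+j³)x^ℓ_{i−2} when i ≡ t_ℓ (mod 4); ∂x^ℓ_i = (1+j)x^ℓ_{i−1} when i ≡ t_ℓ+1 (mod 4) and i > t_ℓ+1; and ∂x^ℓ_i = (1+j)x^ℓ_{i−1}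 + s·x^ℓ_{i−2} when i ≡ t_ℓ+2 (mod 4) and i > t_ℓ+2. Then, setting t = t₁+t₂ and A = B₁+B₂, there exist elements χ_i ∈ (Z₁ ⊗_𝔽 Z₂)_i, for each integer i with t+1 ≤ i ≤ t+4A−3 and i ≢ t+2 (mod 4), satisfying: ∂χ_{t+1} = f₁ ⊗ f₂; ∂χ_i = s(1+j+j²+j³)χ_{i−2} when i ≡ t+3 (mod 4); ∂χ_i = (1+j)χ_{i−1} when i ≡ t (mod 4); and ∂χ_i = (1+j)χ_{i−1} + s·χ_{i−2} when i ≡ t+1 (mod 4) and i > t+1. -/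
open scoped TensorProduct

/-- A `𝒢`-complex over `𝔽 = ℤ/2ℤ`: a `ℤ`-graded `𝔽`-vector space `M = ⊕ᵢ Mᵢ` with
`𝔽`-linear maps `∂` (degree `-1`), `j` (degree `0`), `s` (degree `+1`) satisfying
`∂² = 0`, `j⁴ = id`, `s² = 0`, `s∘j = j³∘s`, `∂∘j = j∘∂` and `∂(sz) = s(∂z) + (1+j²)z`. -/
structure GComplexOn (M : Type*) [AddCommGroup M] [Module (ZMod 2) M] where
  grading : ℤ → Submodule (ZMod 2) M
  isInternal : DirectSum.IsInternal grading
  d : M →ₗ[ZMod 2] M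
  j : M →ₗ[ZMod 2] M
  s : M →ₗ[ZMod 2] M
  d_mem : ∀ (i : ℤ), ∀ x ∈ grading i, d x ∈ grading (i - 1)
  j_mem : ∀ (i : ℤ), ∀ x ∈ grading i, j x ∈ grading i
  s_mem : ∀ (i : ℤ), ∀ x ∈ grading i, s x ∈ grading (i + 1)
  d_sq : ∀ x, d (d x) = 0
  j_four : ∀ x, j (j (j (j x))) = x
  s_sq : ∀ x, s (s x) = 0
  s_j : ∀ x, s (j x) = j (j (j (s x)))
  d_j : ∀ x, d (j x) = j (d x)
  d_s : ∀ x, d (s x) = s (d x) + x + j (j x)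

/-- A fundamental class of degree `t`: a nonzero cycle in degree `t`, fixed by `j` and
killed by `s`. -/
def IsFundClass {M : Type*} [AddCommGroup M] [Module (ZMod 2) M]
    (Z : GComplexOn M) (t : ℤ) (f : M) : Prop :=
  f ≠ 0 ∧ f ∈ Z.grading t ∧ Z.d f = 0 ∧ Z.j f = f ∧ Z.s f = 0

/-- The `n`-th graded piece `(Z₁ ⊗ Z₂)ₙ = ⊕_{i+k=n} (Z₁)ᵢ ⊗ (Z₂)_k` of the tensor
product of graded modules. -/
noncomputable def tensorGrading {M₁ M₂ : Type*} [AddCommGroup M₁] [Module (ZMod 2) M₁]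
    [AddCommGroup M₂] [Module (ZMod 2) M₂]
    (g₁ : ℤ → Submodule (ZMod 2) M₁) (g₂ : ℤ → Submodule (ZMod 2) M₂) (n : ℤ) :
    Submodule (ZMod 2) (M₁ ⊗[ZMod 2] M₂) :=
  ⨆ i : ℤ, Submodule.span (ZMod 2)
    {z | ∃ a ∈ g₁ i, ∃ b ∈ g₂ (n - i), z = a ⊗ₜ[ZMod 2] b}

/-- The differential `∂(a⊗b) = ∂a⊗b + a⊗∂b` on the tensor product. -/
noncomputable def tensorD {M₁ M₂ : Type*} [AddCommGroup M₁] [Module (ZMod 2) M₁]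
    [AddCommGroup M₂] [Module (ZMod 2) M₂]
    (d₁ : M₁ →ₗ[ZMod 2] M₁) (d₂ : M₂ →ₗ[ZMod 2] M₂) :
    M₁ ⊗[ZMod 2] M₂ →ₗ[ZMod 2] M₁ ⊗[ZMod 2] M₂ :=
  TensorProduct.map d₁ LinearMap.id + TensorProduct.map LinearMap.id d₂

/-- The map `j(a⊗b) = ja ⊗ jb` on the tensor product. -/
noncomputable def tensorJ {M₁ M₂ : Type*} [AddCommGroup M₁] [Module (ZMod 2) M₁]
    [AddCommGroup M₂] [Module (ZMod 2) M₂]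
    (j₁ : M₁ →ₗ[ZMod 2] M₁) (j₂ : M₂ →ₗ[ZMod 2] M₂) :
    M₁ ⊗[ZMod 2] M₂ →ₗ[ZMod 2] M₁ ⊗[ZMod 2] M₂ :=
  TensorProduct.map j₁ j₂

/-- The map `s(a⊗b) = sa ⊗ b + j²a ⊗ sb` on the tensor product. -/
noncomputable def tensorS {M₁ M₂ : Type*} [AddCommGroup M₁] [Module (ZMod 2) M₁]
    [AddCommGroup M₂] [Module (ZMod 2) M₂]
    (j₁ s₁ : M₁ →ₗ[ZMod 2] M₁) (s₂ : M₂ →ₗ[ZMod 2] M₂) :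
    M₁ ⊗[ZMod 2] M₂ →ₗ[ZMod 2] M₁ ⊗[ZMod 2] M₂ :=
  TensorProduct.map s₁ LinearMap.id + TensorProduct.map (j₁ ∘ₗ j₁) s₂

/-- A tower of the kind computing the invariant `b` of a suspensionlike complex
(equation (3.3) of the paper): data `(g, d, j, s)` on `M`, a class `f` of degree `t`, and
elements `x i ∈ g i` for `t+1 ≤ i ≤ t+4B-2`, `i ≢ t+3 (mod 4)`, with the prescribed
differentials. -/
def TowerB {M : Type*} [AddCommGroup M] [Module (ZMod 2) M]
    (g : ℤ → Submodule (ZMod 2) M) (d j s : M →ₗ[ZMod 2] M)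
    (f : M) (t : ℤ) (B : ℕ) (x : ℤ → M) : Prop :=
  (∀ i : ℤ, t + 1 ≤ i → i ≤ t + 4*(B : ℤ) - 2 → i % 4 ≠ (t + 3) % 4 → x i ∈ g i) ∧
  (1 ≤ B → d (x (t + 1)) = f) ∧
  (1 ≤ B → d (x (t + 2)) = x (t + 1) + j (x (t + 1))) ∧
  (∀ i : ℤ, t + 1 ≤ i → i ≤ t + 4*(B : ℤ) - 2 → i % 4 = t % 4 →
    d (x i) = s (x (i - 2)) + s (j (x (i - 2))) + s (j (j (x (i - 2))))
      + s (j (j (j (x (i - 2)))))) ∧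
  (∀ i : ℤ, t + 1 < i → i ≤ t + 4*(B : ℤ) - 2 → i % 4 = (t + 1) % 4 →
    d (x i) = x (i - 1) + j (x (i - 1))) ∧
  (∀ i : ℤ, t + 2 < i → i ≤ t + 4*(B : ℤ) - 2 → i % 4 = (t + 2) % 4 →
    d (x i) = x (i - 1) + j (x (i - 1)) + s (x (i - 2)))

/-- A tower of the kind computing the invariant `a` of a suspensionlike complex
(equation (3.2) of the paper): elements `x i ∈ g i` for `t+1 ≤ i ≤ t+4A-3`,
`i ≢ t+2 (mod 4)`, with the prescribed differentials. -/
def TowerA {M : Type*} [AddCommGroup M] [Module (ZMod 2) M]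
    (g : ℤ → Submodule (ZMod 2) M) (d j s : M →ₗ[ZMod 2] M)
    (f : M) (t : ℤ) (A : ℕ) (x : ℤ → M) : Prop :=
  (∀ i : ℤ, t + 1 ≤ i → i ≤ t + 4*(A : ℤ) - 3 → i % 4 ≠ (t + 2) % 4 → x i ∈ g i) ∧
  (1 ≤ A → d (x (t + 1)) = f) ∧
  (∀ i : ℤ, t + 1 ≤ i → i ≤ t + 4*(A : ℤ) - 3 → i % 4 = (t + 3) % 4 →
    d (x i) = s (x (i - 2)) + s (j (x (i - 2))) + s (j (j (x (i - 2))))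
      + s (j (j (j (x (i - 2)))))) ∧
  (∀ i : ℤ, t + 1 ≤ i → i ≤ t + 4*(A : ℤ) - 3 → i % 4 = t % 4 →
    d (x i) = x (i - 1) + j (x (i - 1))) ∧
  (∀ i : ℤ, t + 1 < i → i ≤ t + 4*(A : ℤ) - 3 → i % 4 = (t + 1) % 4 →
    d (x i) = x (i - 1) + j (x (i - 1)) + s (x (i - 2)))

/-! A tower of (3.3) in `Z₁` becomes a tower of (3.2) once its missing degrees `≡ t₁ + 3` are
filled with `(1 + j²) s` of the element below, and tensoring with the fundamental class `f₂`
carries it to `Z₁ ⊗ Z₂`. Its last entry `y = (1 + j²) s x₁(t₁ + 4B₁ - 2)` satisfies `s y = 0`,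
and `(1 + j) y = (1 + j + j² + j³) s x₁(t₁ + 4B₁ - 2) =: U` is a `j`-invariant cycle killed by `s`.
So `U ⊗ x₂` continues the tower for `4B₂ - 2` more degrees, because the relations of (3.3) at
base `t` are those of (3.2) at base `t + 1`. When `B₁ = 0` the tower is `f₁ ⊗` the filled tower
of `x₂`. -/

section Towers

variable {M : Type*} [AddCommGroup M] [Module (ZMod 2) M]

def norm4 (j : M →ₗ[ZMod 2] M) (v : M) : M := v + j v + j (j v) + j (j (j v))

def norm2 (j : M →ₗ[ZMod 2] M) (v : M) : M := v + j (j v)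

lemma norm2_add_map_norm2 (j : M →ₗ[ZMod 2] M) (v : M) :
    norm2 j v + j (norm2 j v) = norm4 j v := by
  simp only [norm2, norm4, map_add]; abel

lemma modEq_four_cases (i t : ℤ) :
    i ≡ t [ZMOD 4] ∨ i ≡ t + 1 [ZMOD 4] ∨ i ≡ t + 2 [ZMOD 4] ∨ i ≡ t + 3 [ZMOD 4] := by
  simp only [Int.ModEq]; omega

def TowerStep (d j s : M →ₗ[ZMod 2] M) (t : ℤ) (y : ℤ → M) (i : ℤ) : Prop :=
  (i ≡ t + 3 [ZMOD 4] → d (y i) = s (norm4 j (y (i - 2)))) ∧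
  (i ≡ t [ZMOD 4] → d (y i) = y (i - 1) + j (y (i - 1))) ∧
  (i ≡ t + 1 [ZMOD 4] → d (y i) = y (i - 1) + j (y (i - 1)) + s (y (i - 2)))

namespace TowerStep

variable {d j s : M →ₗ[ZMod 2] M} {t i : ℤ} {y : ℤ → M}

lemma of_modEq_three (hi : i ≡ t + 3 [ZMOD 4]) (hd : d (y i) = s (norm4 j (y (i - 2)))) :
    TowerStep d j s t y i := by
  refine ⟨fun _ => hd, fun h => ?_, fun h => ?_⟩ <;> simp only [Int.ModEq] at * <;> omega

lemma of_modEq_zero (hi : i ≡ t [ZMOD 4]) (hd : d (y i) = y (i - 1) + j (y (i - 1))) :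
    TowerStep d j s t y i := by
  refine ⟨fun h => ?_, fun _ => hd, fun h => ?_⟩ <;> simp only [Int.ModEq] at * <;> omega

lemma of_modEq_one (hi : i ≡ t + 1 [ZMOD 4])
    (hd : d (y i) = y (i - 1) + j (y (i - 1)) + s (y (i - 2))) : TowerStep d j s t y i := by
  refine ⟨fun h => ?_, fun h => ?_, fun _ => hd⟩ <;> simp only [Int.ModEq] at * <;> omega

lemma of_modEq_two (hi : i ≡ t + 2 [ZMOD 4]) : TowerStep d j s t y i := by
  refine ⟨fun h => ?_, fun h => ?_, fun h => ?_⟩ <;> simp only [Int.ModEq] at * <;> omega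

lemma congr_base {t' : ℤ} (ht : t ≡ t' [ZMOD 4]) (h : TowerStep d j s t y i) :
    TowerStep d j s t' y i :=
  ⟨fun hi => h.1 (hi.trans (ht.add_right 3).symm), fun hi => h.2.1 (hi.trans ht.symm),
    fun hi => h.2.2 (hi.trans (ht.add_right 1).symm)⟩

lemma congr_seq {y' : ℤ → M} (hy : ∀ k, i - 2 ≤ k → k ≤ i → y k = y' k)
    (h : TowerStep d j s t y i) : TowerStep d j s t y' i := by
  simp only [TowerStep, ← hy i (by omega) le_rfl, ← hy (i - 1) (by omega) (by omega),
    ← hy (i - 2) le_rfl (by omega)]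
  exact h

end TowerStep

structure IsATower (g : ℤ → Submodule (ZMod 2) M) (d j s : M →ₗ[ZMod 2] M) (f : M)
    (t n : ℤ) (y : ℤ → M) : Prop where
  mem : ∀ i, t + 1 ≤ i → i ≤ n → ¬ i ≡ t + 2 [ZMOD 4] → y i ∈ g i
  d_first : t + 1 ≤ n → d (y (t + 1)) = f
  step : ∀ i, t + 2 ≤ i → i ≤ n → TowerStep d j s t y i

structure IsBTower (g : ℤ → Submodule (ZMod 2) M) (d j s : M →ₗ[ZMod 2] M) (f : M)
    (t n : ℤ) (y : ℤ → M) : Prop where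
  mem : ∀ i, t + 1 ≤ i → i ≤ n → ¬ i ≡ t + 3 [ZMOD 4] → y i ∈ g i
  d_first : t + 1 ≤ n → d (y (t + 1)) = f
  d_second : t + 2 ≤ n → d (y (t + 2)) = y (t + 1) + j (y (t + 1))
  step : ∀ i, t + 3 ≤ i → i ≤ n → TowerStep d j s (t + 1) y i

variable {g : ℤ → Submodule (ZMod 2) M} {d j s : M →ₗ[ZMod 2] M} {f : M} {t n : ℤ}
  {y : ℤ → M}

lemma IsATower.towerA {A : ℕ} (h : IsATower g d j s f t (t + 4 * A - 3) y) :
    TowerA g d j s f t A y := by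
  refine ⟨h.mem, fun hA => h.d_first (by omega), fun i hi hin hi3 => ?_,
    fun i hi hin hi0 => (h.step i (by omega) hin).2.1 hi0,
    fun i hi hin hi1 => (h.step i (by omega) hin).2.2 hi1⟩
  rw [(h.step i (by omega) hin).1 hi3]
  simp only [norm4, map_add]

lemma TowerB.isBTower {B : ℕ} (h : TowerB g d j s f t B y) :
    IsBTower g d j s f t (t + 4 * B - 2) y := by
  obtain ⟨hmem, hd₁, hd₂, h0, h1, h2⟩ := h
  refine ⟨hmem, fun hB => hd₁ (by omega), fun hB => hd₂ (by omega), fun i hi hin => ?_⟩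
  rcases modEq_four_cases i (t + 1) with hi' | hi' | hi' | hi'
  · exact .of_modEq_zero hi' (h1 i (by omega) hin hi')
  · exact .of_modEq_one hi' (h2 i (by omega) hin (by simp only [Int.ModEq] at *; omega))
  · exact .of_modEq_two hi'
  · refine .of_modEq_three hi' ?_
    rw [h0 i (by omega) hin (hi'.trans (by simp only [Int.ModEq]; omega))]
    simp only [norm4, map_add]

lemma IsBTower.exists_d_eq {i : ℤ} (h : IsBTower g d j s f t n y) (hi : i ≡ t + 2 [ZMOD 4])
    (hti : t + 2 ≤ i) (hin : i ≤ n) : ∃ w, d (y i) = y (i - 1) + j (y (i - 1)) + s w := by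
  rcases eq_or_lt_of_le hti with rfl | hti
  · exact ⟨0, by rw [h.d_second hin, map_zero, add_zero, show t + 2 - 1 = t + 1 by ring]⟩
  · exact ⟨y (i - 2), (h.step i (by omega) hin).2.2 (by simp only [Int.ModEq] at *; omega)⟩

lemma IsATower.mono {n' : ℤ} (h : IsATower g d j s f t n y) (hn : n' ≤ n) :
    IsATower g d j s f t n' y :=
  ⟨fun i hi hin => h.mem i hi (hin.trans hn), fun h' => h.d_first (h'.trans hn),
    fun i hi hin => h.step i hi (hin.trans hn)⟩

end Towers

section Maps

variable {M N : Type*} [AddCommGroup M] [Module (ZMod 2) M] [AddCommGroup N] [Module (ZMod 2) N]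
  {g : ℤ → Submodule (ZMod 2) M} {d j s : M →ₗ[ZMod 2] M} {f : M} {t n : ℤ} {y : ℤ → M}

structure IsGMap (d j s : M →ₗ[ZMod 2] M) (d' j' s' : N →ₗ[ZMod 2] N) (φ : M →ₗ[ZMod 2] N) :
    Prop where
  map_d : ∀ v, φ (d v) = d' (φ v)
  map_j : ∀ v, φ (j v) = j' (φ v)
  map_s : ∀ v, φ (s v) = s' (φ v)

variable {g' : ℤ → Submodule (ZMod 2) N} {d' j' s' : N →ₗ[ZMod 2] N} {φ : M →ₗ[ZMod 2] N}
  {e t' n' : ℤ}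

lemma IsGMap.map_norm4 (hφ : IsGMap d j s d' j' s' φ) (v : M) :
    φ (norm4 j v) = norm4 j' (φ v) := by
  simp only [norm4, map_add, hφ.map_j]

lemma TowerStep.map (hφ : IsGMap d j s d' j' s' φ) {i : ℤ} (ht : t + e = t')
    (h : TowerStep d j s t y i) : TowerStep d' j' s' t' (fun k => φ (y (k - e))) (i + e) := by
  subst ht
  have hshift : ∀ c, i + e - c - e = i - c := fun c => by ring
  simp only [TowerStep, add_sub_cancel_right, hshift]
  refine ⟨fun hi => ?_, fun hi => ?_, fun hi => ?_⟩
  · rw [← hφ.map_d, h.1 (by simp only [Int.ModEq] at *; omega), hφ.map_s, hφ.map_norm4]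
  · rw [← hφ.map_d, h.2.1 (by simp only [Int.ModEq] at *; omega), map_add, hφ.map_j]
  · rw [← hφ.map_d, h.2.2 (by simp only [Int.ModEq] at *; omega), map_add, map_add, hφ.map_j,
      hφ.map_s]

lemma IsATower.map (hφ : IsGMap d j s d' j' s' φ) (hg : ∀ i, ∀ v ∈ g i, φ v ∈ g' (i + e))
    (ht : t + e = t') (hn : n + e = n') (h : IsATower g d j s f t n y) :
    IsATower g' d' j' s' (φ f) t' n' (fun k => φ (y (k - e))) := by
  subst ht hn
  refine ⟨fun i hi hin hi2 => ?_, fun hn => ?_, fun i hi hin => ?_⟩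
  · simpa using hg _ _ (h.mem (i - e) (by omega) (by omega)
      (by simp only [Int.ModEq] at *; omega))
  · rw [show t + e + 1 - e = t + 1 by ring, ← hφ.map_d, h.d_first (by omega)]
  · simpa using (h.step (i - e) (by omega) (by omega)).map (e := e) hφ rfl

lemma IsBTower.map (hφ : IsGMap d j s d' j' s' φ) (hg : ∀ i, ∀ v ∈ g i, φ v ∈ g' (i + e))
    (ht : t + e = t') (hn : n + e = n') (h : IsBTower g d j s f t n y) :
    IsBTower g' d' j' s' (φ f) t' n' (fun k => φ (y (k - e))) := by
  subst ht hn
  refine ⟨fun i hi hin hi3 => ?_, fun hn => ?_, fun hn => ?_, fun i hi hin => ?_⟩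
  · simpa using hg _ _ (h.mem (i - e) (by omega) (by omega)
      (by simp only [Int.ModEq] at *; omega))
  · rw [show t + e + 1 - e = t + 1 by ring, ← hφ.map_d, h.d_first (by omega)]
  · rw [show t + e + 2 - e = t + 2 by ring, show t + e + 1 - e = t + 1 by ring, ← hφ.map_d,
      h.d_second (by omega), map_add, hφ.map_j]
  · simpa using (h.step (i - e) (by omega) (by omega)).map hφ (show t + 1 + e = t + e + 1 by ring)

end Maps

section Append

variable {M : Type*} [AddCommGroup M] [Module (ZMod 2) M]
  {g : ℤ → Submodule (ZMod 2) M} {d j s : M →ₗ[ZMod 2] M} {f f' : M} {t n m : ℤ}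
  {y z : ℤ → M}

lemma IsATower.append (hy : IsATower g d j s f t n y) (hn : n ≡ t + 3 [ZMOD 4]) (htn : t < n)
    (hf' : y n + j (y n) = f') (hs : s (y n) = 0) (hz : IsBTower g d j s f' n m z) :
    IsATower g d j s f t m (fun i => if i ≤ n then y i else z i) := by
  refine ⟨fun i hi him hi2 => ?_, fun _ => ?_, fun i hi him => ?_⟩
  · by_cases hin : i ≤ n
    · simpa only [if_pos hin] using hy.mem i hi hin hi2
    · simpa only [if_neg hin] using
        hz.mem i (by omega) him (by simp only [Int.ModEq] at *; omega)
  · simpa only [if_pos (show t + 1 ≤ n by omega)] using hy.d_first (by omega)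
  rcases le_or_gt i n with hin | hin
  · exact (hy.step i hi hin).congr_seq fun k _ hk => (if_pos (hk.trans hin)).symm
  rcases (show i = n + 1 ∨ i = n + 2 ∨ n + 3 ≤ i by omega) with rfl | rfl | hin
  · refine .of_modEq_zero (by simp only [Int.ModEq] at *; omega) ?_
    simp only [if_neg (show ¬ n + 1 ≤ n by omega), add_sub_cancel_right, le_refl, if_true]
    rw [hz.d_first (by omega), hf']
  · refine .of_modEq_one (by simp only [Int.ModEq] at *; omega) ?_
    simp only [if_neg (show ¬ n + 2 ≤ n by omega), if_neg (show ¬ n + 1 ≤ n by omega),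
      show n + 2 - 1 = n + 1 by ring, add_sub_cancel_right, le_refl, if_true]
    rw [hz.d_second (by omega), hs, add_zero]
  · exact ((hz.step i hin him).congr_base (by simp only [Int.ModEq] at *; omega)).congr_seq
      fun k hk _ => (if_neg (by omega)).symm

end Append

namespace GComplexOn

variable {M : Type*} [AddCommGroup M] [Module (ZMod 2) M] (Z : GComplexOn M)

lemma s_j_j (v : M) : Z.s (Z.j (Z.j v)) = Z.j (Z.j (Z.s v)) := by
  rw [Z.s_j, Z.s_j, Z.j_four]

lemma j_norm4 (v : M) : Z.j (norm4 Z.j v) = norm4 Z.j v := by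
  simp only [norm4, map_add, Z.j_four]; abel

lemma s_norm4 (v : M) : Z.s (norm4 Z.j v) = norm4 Z.j (Z.s v) := by
  simp only [norm4, map_add, Z.s_j, Z.j_four]; abel

lemma s_norm2_s (v : M) : Z.s (norm2 Z.j (Z.s v)) = 0 := by
  simp only [norm2, map_add, s_j_j, Z.s_sq, map_zero, add_zero]

lemma s_norm4_s (v : M) : Z.s (norm4 Z.j (Z.s v)) = 0 := by
  rw [s_norm4, Z.s_sq]
  simp only [norm4, map_zero, add_zero]

lemma norm2_mem {v : M} {i : ℤ} (h : v ∈ Z.grading i) : norm2 Z.j v ∈ Z.grading i :=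
  add_mem h (Z.j_mem _ _ (Z.j_mem _ _ h))

lemma norm4_mem {v : M} {i : ℤ} (h : v ∈ Z.grading i) : norm4 Z.j v ∈ Z.grading i :=
  add_mem (add_mem (add_mem h (Z.j_mem _ _ h)) (Z.j_mem _ _ (Z.j_mem _ _ h)))
    (Z.j_mem _ _ (Z.j_mem _ _ (Z.j_mem _ _ h)))

lemma d_norm2_s {u v w : M} (hv : Z.d v = u + Z.j u + Z.s w) :
    Z.d (norm2 Z.j (Z.s v)) = Z.s (norm4 Z.j u) := by
  -- the error term `(1 + j²) v` of `∂ s = s ∂` is killed by `1 + j²`, as `(1 + j²)² = 0`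
  have hds : Z.d (norm2 Z.j (Z.s v)) = norm2 Z.j (Z.s (Z.d v)) := by
    simp only [norm2, map_add, Z.d_j, Z.d_s, Z.j_four]
    abel_nf
    simp only [two_zsmul, ZModModule.add_self, zero_add]
  rw [hds, hv, s_norm4]
  simp only [norm2, norm4, map_add, Z.s_j, Z.s_sq, Z.j_four, add_zero]
  abel

lemma d_norm4_s {u v w : M} (hv : Z.d v = u + Z.j u + Z.s w) :
    Z.d (norm4 Z.j (Z.s v)) = 0 := by
  rw [← norm2_add_map_norm2, map_add, Z.d_j, Z.d_norm2_s hv, s_norm4, j_norm4,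
    ZModModule.add_self]

def fillTower (t : ℤ) (x : ℤ → M) (i : ℤ) : M :=
  if i ≡ t + 3 [ZMOD 4] then norm2 Z.j (Z.s (x (i - 1))) else x i

end GComplexOn

section Fill

variable {M : Type*} [AddCommGroup M] [Module (ZMod 2) M] {Z : GComplexOn M} {f : M} {t i : ℤ}
  {B : ℕ} {x : ℤ → M}

lemma GComplexOn.fillTower_of_modEq (hi : i ≡ t + 3 [ZMOD 4]) :
    Z.fillTower t x i = norm2 Z.j (Z.s (x (i - 1))) := if_pos hi

lemma GComplexOn.fillTower_of_not_modEq (hi : ¬ i ≡ t + 3 [ZMOD 4]) :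
    Z.fillTower t x i = x i := if_neg hi

lemma IsBTower.isATower_fillTower (h : IsBTower Z.grading Z.d Z.j Z.s f t (t + 4 * B - 2) x) :
    IsATower Z.grading Z.d Z.j Z.s f t (t + 4 * B - 1) (Z.fillTower t x) := by
  refine ⟨fun i hi hin hi2 => ?_, fun _ => ?_, fun i hi hin => ?_⟩
  · by_cases hi3 : i ≡ t + 3 [ZMOD 4]
    · have hs := Z.s_mem _ _ (h.mem (i - 1) (by simp only [Int.ModEq] at *; omega) (by omega)
        (by simp only [Int.ModEq] at *; omega))
      rw [sub_add_cancel] at hs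
      rw [Z.fillTower_of_modEq hi3]
      exact Z.norm2_mem hs
    · rw [Z.fillTower_of_not_modEq hi3]
      exact h.mem i hi (by simp only [Int.ModEq] at *; omega) hi3
  · rw [Z.fillTower_of_not_modEq (i := t + 1) (by simp only [Int.ModEq]; omega)]
    exact h.d_first (by omega)
  rcases modEq_four_cases i t with hi' | hi' | hi' | hi'
  · refine .of_modEq_zero hi' ?_
    rw [Z.fillTower_of_not_modEq (by simp only [Int.ModEq] at *; omega),
      Z.fillTower_of_modEq (by simp only [Int.ModEq] at *; omega),
      show i - 1 - 1 = i - 2 by ring, norm2_add_map_norm2, ← Z.s_norm4]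
    exact (h.step i (by simp only [Int.ModEq] at *; omega)
      (by simp only [Int.ModEq] at *; omega)).1 (by simp only [Int.ModEq] at *; omega)
  · refine .of_modEq_one hi' ?_
    rw [Z.fillTower_of_not_modEq (by simp only [Int.ModEq] at *; omega),
      Z.fillTower_of_not_modEq (by simp only [Int.ModEq] at *; omega),
      Z.fillTower_of_modEq (i := i - 2) (by simp only [Int.ModEq] at *; omega),
      Z.s_norm2_s, add_zero]
    exact (h.step i (by simp only [Int.ModEq] at *; omega)
      (by simp only [Int.ModEq] at *; omega)).2.1 (by simp only [Int.ModEq] at *; omega)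
  · exact .of_modEq_two hi'
  · refine .of_modEq_three hi' ?_
    obtain ⟨w, hw⟩ := h.exists_d_eq (i := i - 1) (by simp only [Int.ModEq] at *; omega)
      (by simp only [Int.ModEq] at *; omega) (by omega)
    rw [show i - 1 - 1 = i - 2 by ring] at hw
    rw [Z.fillTower_of_modEq hi', Z.fillTower_of_not_modEq (by simp only [Int.ModEq] at *; omega)]
    exact Z.d_norm2_s hw

lemma GComplexOn.fillTower_top :
    Z.fillTower t x (t + 4 * B - 1) = norm2 Z.j (Z.s (x (t + 4 * B - 2))) := by
  rw [Z.fillTower_of_modEq (by simp only [Int.ModEq]; omega),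
    show t + 4 * B - 1 - 1 = t + 4 * B - 2 by ring]

lemma IsBTower.norm4_s_top_mem (h : IsBTower Z.grading Z.d Z.j Z.s f t (t + 4 * B - 2) x)
    (hB : 1 ≤ B) : norm4 Z.j (Z.s (x (t + 4 * B - 2))) ∈ Z.grading (t + 4 * B - 1) := by
  have hs := Z.s_mem _ _ (h.mem (t + 4 * B - 2) (by omega) le_rfl
    (by simp only [Int.ModEq]; omega))
  rw [show t + 4 * B - 2 + 1 = t + 4 * B - 1 by ring] at hs
  exact Z.norm4_mem hs

lemma IsBTower.d_norm4_s_top (h : IsBTower Z.grading Z.d Z.j Z.s f t (t + 4 * B - 2) x)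
    (hB : 1 ≤ B) : Z.d (norm4 Z.j (Z.s (x (t + 4 * B - 2)))) = 0 := by
  obtain ⟨w, hw⟩ := h.exists_d_eq (i := t + 4 * B - 2) (by simp only [Int.ModEq]; omega)
    (by omega) le_rfl
  exact Z.d_norm4_s hw

end Fill

section Tensor

variable {M₁ M₂ : Type*} [AddCommGroup M₁] [Module (ZMod 2) M₁] [AddCommGroup M₂]
  [Module (ZMod 2) M₂] {g₁ : ℤ → Submodule (ZMod 2) M₁} {g₂ : ℤ → Submodule (ZMod 2) M₂}
  {d₁ j₁ s₁ : M₁ →ₗ[ZMod 2] M₁} {d₂ j₂ s₂ : M₂ →ₗ[ZMod 2] M₂}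

lemma tmul_mem_tensorGrading {a : M₁} {b : M₂} {i k : ℤ} (ha : a ∈ g₁ i) (hb : b ∈ g₂ k) :
    a ⊗ₜ[ZMod 2] b ∈ tensorGrading g₁ g₂ (i + k) :=
  Submodule.mem_iSup_of_mem i
    (Submodule.subset_span ⟨a, ha, b, by rwa [add_sub_cancel_left], rfl⟩)

lemma isGMap_tmul_right {u : M₂} (hd : d₂ u = 0) (hj : j₂ u = u) (hs : s₂ u = 0) :
    IsGMap d₁ j₁ s₁ (tensorD d₁ d₂) (tensorJ j₁ j₂) (tensorS j₁ s₁ s₂)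
      ((TensorProduct.mk (ZMod 2) M₁ M₂).flip u) where
  map_d v := by simp [tensorD, hd]
  map_j v := by simp [tensorJ, hj]
  map_s v := by simp [tensorS, hs]

lemma isGMap_tmul_left {u : M₁} (hd : d₁ u = 0) (hj : j₁ u = u) (hs : s₁ u = 0) :
    IsGMap d₂ j₂ s₂ (tensorD d₁ d₂) (tensorJ j₁ j₂) (tensorS j₁ s₁ s₂)
      (TensorProduct.mk (ZMod 2) M₁ M₂ u) where
  map_d v := by simp [tensorD, hd]
  map_j v := by simp [tensorJ, hj]
  map_s v := by simp [tensorS, hs, hj]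

lemma tmul_right_mem_tensorGrading {u : M₂} {e : ℤ} (hu : u ∈ g₂ e) :
    ∀ i, ∀ v ∈ g₁ i, (TensorProduct.mk (ZMod 2) M₁ M₂).flip u v ∈ tensorGrading g₁ g₂ (i + e) :=
  fun _ _ hv => tmul_mem_tensorGrading hv hu

lemma tmul_left_mem_tensorGrading {u : M₁} {e : ℤ} (hu : u ∈ g₁ e) :
    ∀ i, ∀ v ∈ g₂ i, TensorProduct.mk (ZMod 2) M₁ M₂ u v ∈ tensorGrading g₁ g₂ (i + e) :=
  fun i _ hv => add_comm e i ▸ tmul_mem_tensorGrading hu hv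

end Tensor

/-- given `b`-type towers of heights `B₁, B₂` over fundamental classes
`f₁, f₂` in 𝒢-complexes `Z₁, Z₂`, there is an `a`-type tower of height `B₁+B₂` over
`f₁ ⊗ f₂` in `Z₁ ⊗_𝔽 Z₂`. -/
theorem stmt_13 {M₁ M₂ : Type*} [AddCommGroup M₁] [Module (ZMod 2) M₁]
    [AddCommGroup M₂] [Module (ZMod 2) M₂]
    (Z₁ : GComplexOn M₁) (Z₂ : GComplexOn M₂) (t₁ t₂ : ℤ) (B₁ B₂ : ℕ)
    (f₁ : M₁) (f₂ : M₂) (hf₁ : IsFundClass Z₁ t₁ f₁) (hf₂ : IsFundClass Z₂ t₂ f₂)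
    (x₁ : ℤ → M₁) (x₂ : ℤ → M₂)
    (hx₁ : TowerB Z₁.grading Z₁.d Z₁.j Z₁.s f₁ t₁ B₁ x₁)
    (hx₂ : TowerB Z₂.grading Z₂.d Z₂.j Z₂.s f₂ t₂ B₂ x₂) :
    ∃ χ : ℤ → M₁ ⊗[ZMod 2] M₂,
      TowerA (tensorGrading Z₁.grading Z₂.grading) (tensorD Z₁.d Z₂.d)
        (tensorJ Z₁.j Z₂.j) (tensorS Z₁.j Z₁.s Z₂.s)
        (f₁ ⊗ₜ[ZMod 2] f₂) (t₁ + t₂) (B₁ + B₂) χ := by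
  obtain ⟨-, hf₁g, hf₁d, hf₁j, hf₁s⟩ := hf₁
  obtain ⟨-, hf₂g, hf₂d, hf₂j, hf₂s⟩ := hf₂
  rcases Nat.eq_zero_or_pos B₁ with rfl | hB₁
  · have hχ := hx₂.isBTower.isATower_fillTower.map (isGMap_tmul_left hf₁d hf₁j hf₁s)
      (tmul_left_mem_tensorGrading hf₁g) (add_comm t₂ t₁) rfl
    exact ⟨_, (hχ.mono (by push_cast; omega)).towerA⟩
  · have hφ := isGMap_tmul_right (d₁ := Z₁.d) (j₁ := Z₁.j) (s₁ := Z₁.s) hf₂d hf₂j hf₂s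
    have hy := hx₁.isBTower.isATower_fillTower.map hφ (tmul_right_mem_tensorGrading hf₂g) rfl rfl
    have hz := hx₂.isBTower.map
      (isGMap_tmul_left (hx₁.isBTower.d_norm4_s_top hB₁) (Z₁.j_norm4 _) (Z₁.s_norm4_s _))
      (tmul_left_mem_tensorGrading (hx₁.isBTower.norm4_s_top_mem hB₁)) (add_comm _ _)
      (show _ = t₁ + t₂ + 4 * ↑(B₁ + B₂) - 3 by push_cast; ring)
    refine ⟨_, (hy.append (by simp only [Int.ModEq]; omega) (by omega) ?_ ?_ hz).towerA⟩
    · simp only [add_sub_cancel_right, Z₁.fillTower_top, ← hφ.map_j, ← map_add,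
        norm2_add_map_norm2]
      rfl
    · simp only [add_sub_cancel_right, Z₁.fillTower_top, ← hφ.map_s, Z₁.s_norm2_s, map_zero]
end
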